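/- arXiv:1810.00294 — 6 statements merged into one kernel-verified Lean document; each statement's English description precedes it below -/
import Mathlib

section
/- Let m = 1 and consider the diffusion RLS under Assumptions A1, A2, A3. If Σ_{k=0}^∞ Σ_{i=1}^n φ_{k,i}² < +∞ (equivalently, the sequence Σ_{i=1}^n P_{k+1,i}^{-1} stays bounded), then there exist constants μ_1,…,μ_n > 0, determined only by the data {φ_{k,i}} and the matrix A, such that for every choice of initial estimates with Σ_{i=1}^n μ_i(θ_{0,i} − θ) ≠ 0, one has liminf_{k→∞} E‖Θ̃_k‖² > 0 and Θ̃_k does not converge to 0 in probability. -/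
/-!
With `e_k` the error vector, the diffusion RLS recursion reads
`e_{k+1} = A (D_k e_k + L_k ε_k)` with `D_k = diag (P_{k+1,j} P_{k,j}⁻¹)`, so
`E e_k = A D_{k-1} ⋯ A D_0 e_0`. Since `A` is column stochastic, the column sums of this product
decrease in `k` and are bounded below by `∏_j P_{k,j} ≥ ∏_j (1 + ∑_t φ_{t,j}²)⁻¹ > 0`; their limits
are the weights `μ_j`, and `∑_i E e_{k,i} → ∑_j μ_j e_{0,j} ≠ 0`. This keeps `E ‖e_k‖`, hence also
`E ‖e_k‖²`, away from `0`. On the other hand the noise at time `k` is independent of `e_k`, so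
`E ‖e_k‖²` grows by at most `M ∑_j φ_{k,j}²` per step and stays bounded, and an `L²`-bounded
sequence whose first moments stay away from `0` cannot tend to `0` in probability.
-/

open MeasureTheory Filter Matrix ProbabilityTheory Topology

section Elementary

variable {ι : Type*} [Fintype ι] {A : Matrix ι ι ℝ}

theorem prod_le_of_nonneg_of_le_one [DecidableEq ι] {r : ι → ℝ} (hr0 : ∀ l, 0 ≤ r l)
    (hr1 : ∀ l, r l ≤ 1) (l : ι) : ∏ l', r l' ≤ r l := by
  rw [← Finset.mul_prod_erase Finset.univ r (Finset.mem_univ l)]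
  exact mul_le_of_le_one_right (hr0 l) (Finset.prod_le_one (fun l' _ => hr0 l') fun l' _ => hr1 l')

theorem sum_sq_mulVec_le_sum_sq (hA : ∀ i j, 0 ≤ A i j) (hA_row : ∀ i, ∑ j, A i j = 1)
    (hA_col : ∀ j, ∑ i, A i j = 1) (u : ι → ℝ) :
    ∑ i, (A *ᵥ u) i ^ 2 ≤ ∑ j, u j ^ 2 := by
  have jensen (i : ι) : (A *ᵥ u) i ^ 2 ≤ ∑ j, A i j * u j ^ 2 :=
    (even_two.convexOn_pow (𝕜 := ℝ)).map_sum_le (fun j _ => hA i j) (hA_row i)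
      (fun j _ => Set.mem_univ (u j))
  calc ∑ i, (A *ᵥ u) i ^ 2 ≤ ∑ i, ∑ j, A i j * u j ^ 2 := Finset.sum_le_sum fun i _ => jensen i
    _ = ∑ j, u j ^ 2 := by
      rw [Finset.sum_comm]
      simp only [← Finset.sum_mul, hA_col, one_mul]

theorem exists_le_of_le_add_summable {V a : ℕ → ℝ} (ha0 : ∀ k, 0 ≤ a k) (ha : Summable a)
    (hV : ∀ k, V (k + 1) ≤ V k + a k) : ∃ B, ∀ k, V k ≤ B := by
  refine ⟨V 0 + ∑' k, a k, fun k => ?_⟩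
  have partial_sums : V k ≤ V 0 + ∑ t ∈ Finset.range k, a t := by
    induction k with
    | zero => simp
    | succ k ih => linarith [hV k, Finset.sum_range_succ a k]
  linarith [ha.sum_le_tsum (Finset.range k) fun t _ => ha0 t]

end Elementary

section MeanPropagator

variable {ι : Type*} [Fintype ι] [DecidableEq ι] {A : Matrix ι ι ℝ} {r : ℕ → ι → ℝ}

def meanPropagator (A : Matrix ι ι ℝ) (r : ℕ → ι → ℝ) : ℕ → Matrix ι ι ℝ
  | 0 => 1
  | k + 1 => A * diagonal (r k) * meanPropagator A r k

theorem meanPropagator_succ_apply (k : ℕ) (i j : ι) :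
    meanPropagator A r (k + 1) i j = ∑ l, A i l * r k l * meanPropagator A r k l j := by
  rw [meanPropagator, mul_apply]
  simp only [mul_diagonal]

theorem meanPropagator_nonneg (hA : ∀ i j, 0 ≤ A i j) (hr : ∀ k j, 0 ≤ r k j) (k : ℕ) (i j : ι) :
    0 ≤ meanPropagator A r k i j := by
  induction k generalizing i j with
  | zero => by_cases h : i = j <;> simp [meanPropagator, one_apply, h]
  | succ k ih =>
    rw [meanPropagator_succ_apply]
    exact Finset.sum_nonneg fun l _ => mul_nonneg (mul_nonneg (hA i l) (hr k l)) (ih l j)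

theorem sum_meanPropagator_succ (hA_col : ∀ j, ∑ i, A i j = 1) (k : ℕ) (j : ι) :
    ∑ i, meanPropagator A r (k + 1) i j = ∑ l, r k l * meanPropagator A r k l j := by
  simp only [meanPropagator_succ_apply]
  rw [Finset.sum_comm]
  simp only [mul_assoc, ← Finset.sum_mul, hA_col, one_mul]

theorem antitone_sum_meanPropagator (hA : ∀ i j, 0 ≤ A i j) (hA_col : ∀ j, ∑ i, A i j = 1)
    (hr0 : ∀ k j, 0 ≤ r k j) (hr1 : ∀ k j, r k j ≤ 1) (j : ι) :
    Antitone fun k => ∑ i, meanPropagator A r k i j := by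
  refine antitone_nat_of_succ_le fun k => ?_
  rw [sum_meanPropagator_succ hA_col]
  exact Finset.sum_le_sum fun l _ =>
    mul_le_of_le_one_left (meanPropagator_nonneg hA hr0 k l j) (hr1 k l)

theorem prod_le_sum_meanPropagator (hA : ∀ i j, 0 ≤ A i j) (hA_col : ∀ j, ∑ i, A i j = 1)
    (hr0 : ∀ k j, 0 ≤ r k j) (hr1 : ∀ k j, r k j ≤ 1) (k : ℕ) (j : ι) :
    ∏ t ∈ Finset.range k, ∏ l, r t l ≤ ∑ i, meanPropagator A r k i j := by
  induction k with
  | zero => simp [meanPropagator, one_apply]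
  | succ k ih =>
    have hprod_nonneg : 0 ≤ ∏ l, r k l := Finset.prod_nonneg fun l _ => hr0 k l
    calc ∏ t ∈ Finset.range (k + 1), ∏ l, r t l
        = (∏ l, r k l) * ∏ t ∈ Finset.range k, ∏ l, r t l := by
          rw [Finset.prod_range_succ, mul_comm]
      _ ≤ (∏ l, r k l) * ∑ l, meanPropagator A r k l j := mul_le_mul_of_nonneg_left ih hprod_nonneg
      _ = ∑ l, (∏ l', r k l') * meanPropagator A r k l j := Finset.mul_sum _ _ _
      _ ≤ ∑ l, r k l * meanPropagator A r k l j := Finset.sum_le_sum fun l _ =>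
          mul_le_mul_of_nonneg_right (prod_le_of_nonneg_of_le_one (hr0 k) (hr1 k) l)
            (meanPropagator_nonneg hA hr0 k l j)
      _ = ∑ i, meanPropagator A r (k + 1) i j := (sum_meanPropagator_succ hA_col k j).symm

theorem exists_pos_tendsto_sum_meanPropagator (hA : ∀ i j, 0 ≤ A i j)
    (hA_col : ∀ j, ∑ i, A i j = 1) (hr0 : ∀ k j, 0 ≤ r k j) (hr1 : ∀ k j, r k j ≤ 1) {ρ : ℝ}
    (hρ : 0 < ρ) (hρ_le : ∀ k, ρ ≤ ∏ t ∈ Finset.range k, ∏ l, r t l) :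
    ∃ μ : ι → ℝ, (∀ j, 0 < μ j) ∧
      ∀ j, Tendsto (fun k => ∑ i, meanPropagator A r k i j) atTop (𝓝 (μ j)) := by
  have hbound (k : ℕ) (j : ι) : ρ ≤ ∑ i, meanPropagator A r k i j :=
    (hρ_le k).trans (prod_le_sum_meanPropagator hA hA_col hr0 hr1 k j)
  refine ⟨fun j => ⨅ k, ∑ i, meanPropagator A r k i j,
    fun j => hρ.trans_le (le_ciInf fun k => hbound k j), fun j => ?_⟩
  exact tendsto_atTop_ciInf (antitone_sum_meanPropagator hA hA_col hr0 hr1 j)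
    ⟨ρ, Set.forall_mem_range.2 fun k => hbound k j⟩

end MeanPropagator

section RLS

variable {ι : Type*} (φ : ℕ → ι → ℝ)

/-- `P_{k,j}⁻¹` in the paper's notation. -/
noncomputable def rlsInfo (k : ℕ) (j : ι) : ℝ := 1 + ∑ t ∈ Finset.range k, φ t j ^ 2

noncomputable def rlsGain (k : ℕ) (j : ι) : ℝ := φ k j / rlsInfo φ (k + 1) j

theorem one_le_rlsInfo (k : ℕ) (j : ι) : 1 ≤ rlsInfo φ k j :=
  le_add_of_nonneg_right (Finset.sum_nonneg fun _ _ => sq_nonneg _)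

theorem rlsInfo_pos (k : ℕ) (j : ι) : 0 < rlsInfo φ k j :=
  zero_lt_one.trans_le (one_le_rlsInfo φ k j)

theorem rlsInfo_succ (k : ℕ) (j : ι) : rlsInfo φ (k + 1) j = rlsInfo φ k j + φ k j ^ 2 := by
  rw [rlsInfo, rlsInfo, Finset.sum_range_succ, add_assoc]

theorem one_sub_rlsGain_mul (k : ℕ) (j : ι) :
    1 - rlsGain φ k j * φ k j = rlsInfo φ k j / rlsInfo φ (k + 1) j := by
  have hne := (rlsInfo_pos φ (k + 1) j).ne'
  rw [rlsGain, eq_div_iff hne, sub_mul, one_mul, div_mul_eq_mul_div, div_mul_cancel₀ _ hne,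
    rlsInfo_succ]
  ring

theorem one_sub_rlsGain_mul_nonneg (k : ℕ) (j : ι) : 0 ≤ 1 - rlsGain φ k j * φ k j := by
  rw [one_sub_rlsGain_mul]
  exact div_nonneg (rlsInfo_pos φ k j).le (rlsInfo_pos φ (k + 1) j).le

theorem one_sub_rlsGain_mul_le_one (k : ℕ) (j : ι) : 1 - rlsGain φ k j * φ k j ≤ 1 := by
  rw [one_sub_rlsGain_mul, div_le_one (rlsInfo_pos φ (k + 1) j), rlsInfo_succ]
  exact le_add_of_nonneg_right (sq_nonneg _)

theorem rlsGain_sq_le (k : ℕ) (j : ι) : rlsGain φ k j ^ 2 ≤ φ k j ^ 2 := by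
  rw [rlsGain, div_pow]
  exact div_le_self (sq_nonneg _) (one_le_pow₀ (one_le_rlsInfo φ (k + 1) j))

theorem prod_range_one_sub_rlsGain_mul (k : ℕ) (j : ι) :
    ∏ t ∈ Finset.range k, (1 - rlsGain φ t j * φ t j) = (rlsInfo φ k j)⁻¹ := by
  induction k with
  | zero => simp [rlsInfo]
  | succ k ih =>
    rw [Finset.prod_range_succ, ih, one_sub_rlsGain_mul]
    field_simp [(rlsInfo_pos φ k j).ne']

theorem exists_pos_le_prod_one_sub_rlsGain_mul [Fintype ι] (hφ : Summable fun k => ∑ j, φ k j ^ 2) :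
    ∃ ρ > 0, ∀ k, ρ ≤ ∏ t ∈ Finset.range k, ∏ j, (1 - rlsGain φ t j * φ t j) := by
  set C := ∑' k, ∑ j, φ k j ^ 2
  have hC : 0 ≤ C := tsum_nonneg fun k => Finset.sum_nonneg fun j _ => sq_nonneg _
  refine ⟨∏ _j : ι, (1 + C)⁻¹, Finset.prod_pos fun j _ => by positivity, fun k => ?_⟩
  rw [Finset.prod_comm]
  refine Finset.prod_le_prod (fun j _ => by positivity) fun j _ => ?_
  rw [prod_range_one_sub_rlsGain_mul]
  refine inv_anti₀ (rlsInfo_pos φ k j) ?_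
  rw [rlsInfo]
  gcongr
  calc ∑ t ∈ Finset.range k, φ t j ^ 2 ≤ ∑ t ∈ Finset.range k, ∑ j', φ t j' ^ 2 :=
        Finset.sum_le_sum fun t _ =>
          Finset.single_le_sum (fun j' _ => sq_nonneg (φ t j')) (Finset.mem_univ j)
    _ ≤ C := hφ.sum_le_tsum _ fun t _ => Finset.sum_nonneg fun j' _ => sq_nonneg _

theorem summable_sum_rlsGain_sq_mul [Fintype ι] (hφ : Summable fun k => ∑ j, φ k j ^ 2)
    {w : ℕ → ι → ℝ} {M : ℝ} (hw0 : ∀ k j, 0 ≤ w k j) (hwM : ∀ k j, w k j ≤ M) :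
    Summable fun k => ∑ j, rlsGain φ k j ^ 2 * w k j := by
  refine (hφ.mul_left M).of_nonneg_of_le
    (fun k => Finset.sum_nonneg fun j _ => mul_nonneg (sq_nonneg _) (hw0 k j)) fun k => ?_
  rw [Finset.mul_sum]
  refine Finset.sum_le_sum fun j _ => ?_
  rw [mul_comm M]
  exact mul_le_mul (rlsGain_sq_le φ k j) (hwM k j) (hw0 k j) (sq_nonneg _)

end RLS

section Recursion

variable {Ω β γ : Type*} {mΩ : MeasurableSpace Ω} [mβ : MeasurableSpace β] [MeasurableSpace γ]
  {ξ : ℕ → Ω → β} {x : ℕ → Ω → γ}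

theorem measurable_iSup_comap_of_recursion (F : ℕ → γ → β → γ)
    (hF : ∀ k, Measurable (Function.uncurry (F k))) (x₀ : γ) (h0 : ∀ ω, x 0 ω = x₀)
    (hx : ∀ k ω, x (k + 1) ω = F k (x k ω) (ξ k ω)) (k : ℕ) :
    Measurable[⨆ t ∈ Set.Iio k, mβ.comap (ξ t)] (x k) := by
  induction k with
  | zero =>
    rw [funext h0]
    exact measurable_const
  | succ k ih =>
    rw [show x (k + 1) = fun ω => F k (x k ω) (ξ k ω) from funext (hx k)]
    have past_le : (⨆ t ∈ Set.Iio k, mβ.comap (ξ t)) ≤ ⨆ t ∈ Set.Iio (k + 1), mβ.comap (ξ t) :=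
      biSup_mono fun t ht => Nat.lt_succ_of_lt ht
    have current_le : mβ.comap (ξ k) ≤ ⨆ t ∈ Set.Iio (k + 1), mβ.comap (ξ t) :=
      le_biSup (fun t => mβ.comap (ξ t)) (Nat.lt_succ_self k)
    exact (hF k).comp ((ih.mono past_le le_rfl).prodMk
      ((comap_measurable (ξ k)).mono current_le le_rfl))

theorem measurable_of_recursion (hξ_meas : ∀ k, Measurable (ξ k)) (F : ℕ → γ → β → γ)
    (hF : ∀ k, Measurable (Function.uncurry (F k))) (x₀ : γ) (h0 : ∀ ω, x 0 ω = x₀)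
    (hx : ∀ k ω, x (k + 1) ω = F k (x k ω) (ξ k ω)) (k : ℕ) : Measurable (x k) :=
  (measurable_iSup_comap_of_recursion F hF x₀ h0 hx k).mono
    (iSup₂_le fun t _ => (hξ_meas t).comap_le) le_rfl

theorem indepFun_of_recursion {P : Measure Ω} (hξ_meas : ∀ k, Measurable (ξ k))
    (hξ : iIndepFun ξ P) (F : ℕ → γ → β → γ) (hF : ∀ k, Measurable (Function.uncurry (F k)))
    (x₀ : γ) (h0 : ∀ ω, x 0 ω = x₀) (hx : ∀ k ω, x (k + 1) ω = F k (x k ω) (ξ k ω)) (k : ℕ) :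
    IndepFun (x k) (ξ k) P := by
  rw [IndepFun_iff_Indep]
  have past_indep_current : Indep (⨆ t ∈ Set.Iio k, mβ.comap (ξ t))
      (⨆ t ∈ ({k} : Set ℕ), mβ.comap (ξ t)) P :=
    indep_iSup_of_disjoint (fun t => (hξ_meas t).comap_le) hξ (by simp)
  rw [iSup_singleton] at past_indep_current
  exact indep_of_indep_of_le_left past_indep_current
    (measurable_iSup_comap_of_recursion F hF x₀ h0 hx k).comap_le

end Recursion

section SecondMoments

variable {Ω ι : Type*} [Fintype ι] {mΩ : MeasurableSpace Ω} {P : Measure Ω}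

theorem sq_integral_le_integral_sq [IsProbabilityMeasure P] {X : Ω → ℝ} (hX : MemLp X 2 P) :
    (∫ ω, X ω ∂P) ^ 2 ≤ ∫ ω, X ω ^ 2 ∂P := by
  have := variance_nonneg X P
  rw [variance_eq_sub hX] at this
  simpa using this

theorem integral_add_sq_of_integral_mul_eq_zero {X Y : Ω → ℝ} (hX : MemLp X 2 P) (hY : MemLp Y 2 P)
    (hXY : ∫ ω, X ω * Y ω ∂P = 0) (a b : ℝ) :
    ∫ ω, (a * X ω + b * Y ω) ^ 2 ∂P = a ^ 2 * ∫ ω, X ω ^ 2 ∂P + b ^ 2 * ∫ ω, Y ω ^ 2 ∂P := by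
  have expand : (fun ω => (a * X ω + b * Y ω) ^ 2) =
      fun ω => a ^ 2 * X ω ^ 2 + (2 * a * b * (X ω * Y ω) + b ^ 2 * Y ω ^ 2) := by
    funext ω; ring
  have hXY_int : Integrable (fun ω => X ω * Y ω) P := hX.integrable_mul hY
  have hX2 := hX.integrable_sq.const_mul (a ^ 2)
  have hY2 := hY.integrable_sq.const_mul (b ^ 2)
  have hXY2 := hXY_int.const_mul (2 * a * b)
  rw [expand, integral_add hX2 (by exact hXY2.add hY2), integral_add hXY2 hY2]
  simp only [integral_const_mul, hXY, mul_zero, zero_add]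

theorem abs_sum_le_sqrt_card_mul_sqrt_sum_sq (y : ι → ℝ) :
    |∑ i, y i| ≤ √(Fintype.card ι) * √(∑ i, y i ^ 2) := by
  rw [← Real.sqrt_sq_eq_abs, ← Real.sqrt_mul (Nat.cast_nonneg _)]
  exact Real.sqrt_le_sqrt (by simpa using sq_sum_le_card_mul_sum_sq (s := Finset.univ) (f := y))

theorem sqrt_sum_sq_sq (y : ι → ℝ) : √(∑ i, y i ^ 2) ^ 2 = ∑ i, y i ^ 2 :=
  Real.sq_sqrt (Finset.sum_nonneg fun i _ => sq_nonneg (y i))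

theorem memLp_sqrt_sum_sq {Y : ι → Ω → ℝ} (hY : ∀ i, MemLp (Y i) 2 P) :
    MemLp (fun ω => √(∑ i, Y i ω ^ 2)) 2 P := by
  have hsum : Integrable (fun ω => ∑ i, Y i ω ^ 2) P :=
    integrable_finsetSum _ fun i _ => (hY i).integrable_sq
  refine (memLp_two_iff_integrable_sq hsum.aemeasurable.sqrt.aestronglyMeasurable).2 ?_
  exact hsum.congr (ae_of_all _ fun ω => (sqrt_sum_sq_sq fun i => Y i ω).symm)

theorem abs_sum_integral_le_sqrt_card_mul_integral [IsFiniteMeasure P] {Y : ι → Ω → ℝ}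
    (hY : ∀ i, MemLp (Y i) 2 P) :
    |∑ i, ∫ ω, Y i ω ∂P| ≤ √(Fintype.card ι) * ∫ ω, √(∑ i, Y i ω ^ 2) ∂P := by
  have hY_int (i : ι) : Integrable (Y i) P := (hY i).integrable one_le_two
  rw [← integral_finsetSum _ fun i _ => hY_int i, ← integral_const_mul]
  exact abs_integral_le_integral_abs.trans
    (integral_mono (integrable_finsetSum _ fun i _ => hY_int i).abs
      (((memLp_sqrt_sum_sq hY).integrable one_le_two).const_mul _)
      fun ω => abs_sum_le_sqrt_card_mul_sqrt_sum_sq fun i => Y i ω)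

theorem exists_pos_eventually_le_integral_sqrt_sum_sq [IsProbabilityMeasure P]
    {Y : ℕ → ι → Ω → ℝ} (hY : ∀ k i, MemLp (Y k i) 2 P) {s : ℝ} (hs : s ≠ 0)
    (hmean : Tendsto (fun k => ∑ i, ∫ ω, Y k i ω ∂P) atTop (𝓝 s)) :
    ∃ c > 0, ∀ᶠ k in atTop, c ≤ ∫ ω, √(∑ i, Y k i ω ^ 2) ∂P := by
  have hcard : 0 < √(Fintype.card ι) := by
    refine Real.sqrt_pos.2 (Nat.cast_pos.2 (Fintype.card_pos_iff.2 ?_))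
    by_contra hempty
    rw [not_nonempty_iff] at hempty
    exact hs (tendsto_nhds_unique hmean (by simp))
  refine ⟨|s| / 2 / √(Fintype.card ι), by positivity, ?_⟩
  filter_upwards [hmean.abs.eventually (eventually_ge_nhds (half_lt_self (abs_pos.2 hs)))]
    with k hk
  rw [div_le_iff₀' hcard]
  exact hk.trans (abs_sum_integral_le_sqrt_card_mul_integral (hY k))

theorem not_tendstoInMeasure_zero_of_integral_sq_le [IsProbabilityMeasure P] {X : ℕ → Ω → ℝ}
    (hX : ∀ k, MemLp (X k) 2 P) {B c : ℝ} (hB : ∀ k, ∫ ω, X k ω ^ 2 ∂P ≤ B) (hc : 0 < c)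
    (hlow : ∀ᶠ k in atTop, c ≤ ∫ ω, |X k ω| ∂P) :
    ¬TendstoInMeasure P X atTop fun _ => 0 := by
  intro hconv
  set δ := c / 3
  set b := 3 * (|B| + 1) / c
  have hδ : 0 < δ := by positivity
  have hb : 0 < b := by positivity
  have pointwise (x : ℝ) : |x| ≤ δ + x ^ 2 / b + {y : ℝ | δ ≤ |y|}.indicator (fun _ => b) x := by
    have hx2 : 0 ≤ x ^ 2 / b := by positivity
    by_cases hx : δ ≤ |x|
    · rw [Set.indicator_of_mem (show x ∈ {y : ℝ | δ ≤ |y|} from hx)]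
      rcases le_or_gt |x| b with hxb | hxb
      · linarith
      · have : |x| ≤ x ^ 2 / b := by
          rw [le_div_iff₀ hb, ← sq_abs]
          nlinarith [abs_nonneg x]
        linarith
    · rw [Set.indicator_of_notMem (show x ∉ {y : ℝ | δ ≤ |y|} from hx)]
      linarith
  have small_set : Tendsto (fun k => P.real {ω | δ ≤ |X k ω|}) atTop (𝓝 0) := by
    simpa using (tendstoInMeasure_iff_measureReal_norm.1 hconv) δ (by positivity)
  have integral_le (k : ℕ) : ∫ ω, |X k ω| ∂P ≤ δ + B / b + b * P.real {ω | δ ≤ |X k ω|} := by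
    have hXk := (hX k).aestronglyMeasurable
    have hs : NullMeasurableSet {ω | δ ≤ |X k ω|} P :=
      nullMeasurableSet_le aemeasurable_const hXk.aemeasurable.abs
    have hsq : Integrable (fun ω => X k ω ^ 2 / b) P := (hX k).integrable_sq.div_const b
    have hind : Integrable ({ω | δ ≤ |X k ω|}.indicator fun _ => b) P :=
      (integrable_const b).indicator₀ hs
    calc ∫ ω, |X k ω| ∂P
        ≤ ∫ ω, (δ + X k ω ^ 2 / b + {ω | δ ≤ |X k ω|}.indicator (fun _ => b) ω) ∂P :=
          integral_mono ((hX k).integrable one_le_two).abs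
            (((integrable_const δ).add hsq).add hind) fun ω => pointwise (X k ω)
      _ = δ + (∫ ω, X k ω ^ 2 ∂P) / b + b * P.real {ω | δ ≤ |X k ω|} := by
          rw [integral_add (by exact (integrable_const δ).add hsq) hind,
            integral_add (integrable_const δ) hsq,
            integral_indicator₀ hs, setIntegral_const, integral_const, integral_div]
          simp [mul_comm]
      _ ≤ δ + B / b + b * P.real {ω | δ ≤ |X k ω|} := by
          gcongr
          exact hB k
  have : c ≤ δ + B / b := by
    refine ge_of_tendsto ?_ (hlow.mono fun k hk => hk.trans (integral_le k))
    simpa using (small_set.const_mul b).const_add (δ + B / b)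
  have : B / b < c / 3 := by
    have hbc : b * c = 3 * (|B| + 1) := div_mul_cancel₀ _ hc.ne'
    rw [div_lt_iff₀ hb]
    nlinarith [le_abs_self B]
  linarith [show δ = c / 3 from rfl]

end SecondMoments

section DiffusionError

variable {ι Ω : Type*} [Fintype ι] {mΩ : MeasurableSpace Ω} {P : Measure Ω}
  {A : Matrix ι ι ℝ} {r L : ℕ → ι → ℝ} {ε e : ℕ → ι → Ω → ℝ} {e₀ : ι → ℝ}

def IsDiffusionError (A : Matrix ι ι ℝ) (r L : ℕ → ι → ℝ) (ε e : ℕ → ι → Ω → ℝ) : Prop :=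
  ∀ k i ω, e (k + 1) i ω = ∑ j, A i j * (r k j * e k j ω + L k j * ε k j ω)

theorem isDiffusionError_of_atc (hA_row : ∀ i, ∑ j, A i j = 1) {φ : ℕ → ι → ℝ} {θ : ℝ}
    {θe : ℕ → ι → Ω → ℝ}
    (hrec : ∀ k i ω, θe (k + 1) i ω =
      ∑ j, A i j * (θe k j ω + L k j * ((θ * φ k j + ε k j ω) - θe k j ω * φ k j))) :
    IsDiffusionError A (fun k j => 1 - L k j * φ k j) L ε fun k i ω => θe k i ω - θ := by
  intro k i ω
  have hθ : ∑ j, A i j * θ = θ := by rw [← Finset.sum_mul, hA_row, one_mul]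
  calc θe (k + 1) i ω - θ
      = ∑ j, A i j * (θe k j ω + L k j * ((θ * φ k j + ε k j ω) - θe k j ω * φ k j))
        - ∑ j, A i j * θ := by rw [hrec, hθ]
    _ = _ := by
      rw [← Finset.sum_sub_distrib]
      exact Finset.sum_congr rfl fun j _ => by ring

namespace IsDiffusionError

theorem memLp [IsFiniteMeasure P] (h : IsDiffusionError A r L ε e) (h0 : ∀ i ω, e 0 i ω = e₀ i)
    (hε : ∀ k i, MemLp (ε k i) 2 P) (k : ℕ) (i : ι) : MemLp (e k i) 2 P := by
  induction k generalizing i with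
  | zero =>
    rw [show e 0 i = fun _ => e₀ i from funext (h0 i)]
    exact memLp_const _
  | succ k ih =>
    rw [show e (k + 1) i = _ from funext (h k i)]
    exact memLp_finsetSum _ fun j _ => (((ih j).const_mul _).add ((hε k j).const_mul _)).const_mul _

theorem succ_eq_mulVec (h : IsDiffusionError A r L ε e) (k : ℕ) (ω : Ω) :
    (fun i => e (k + 1) i ω) = A *ᵥ (r k * (fun i => e k i ω) + L k * fun i => ε k i ω) :=
  funext fun i => h k i ω

theorem measurable (h : IsDiffusionError A r L ε e) (h0 : ∀ i ω, e 0 i ω = e₀ i)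
    (hε_meas : ∀ k i, Measurable (ε k i)) (k : ℕ) (i : ι) : Measurable (e k i) :=
  (measurable_pi_iff.1 (measurable_of_recursion (x := fun k ω i => e k i ω)
    (fun k => measurable_pi_lambda _ fun i => hε_meas k i)
    (fun k u v => A *ᵥ (r k * u + L k * v)) (fun k => by fun_prop) e₀
    (fun ω => funext fun i => h0 i ω) h.succ_eq_mulVec k)) i

theorem indepFun (h : IsDiffusionError A r L ε e) (h0 : ∀ i ω, e 0 i ω = e₀ i)
    (hε_meas : ∀ k i, Measurable (ε k i)) (hε_indep : iIndepFun (fun k ω i => ε k i ω) P)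
    (k : ℕ) (j j' : ι) : IndepFun (e k j) (ε k j') P :=
  (indepFun_of_recursion (x := fun k ω i => e k i ω)
    (fun k => measurable_pi_lambda _ fun i => hε_meas k i) hε_indep
    (fun k u v => A *ᵥ (r k * u + L k * v)) (fun k => by fun_prop) e₀
    (fun ω => funext fun i => h0 i ω) h.succ_eq_mulVec k).comp
    (measurable_pi_apply j) (measurable_pi_apply j')

theorem integral_mul_eq_zero (h : IsDiffusionError A r L ε e) (h0 : ∀ i ω, e 0 i ω = e₀ i)
    (hε_meas : ∀ k i, Measurable (ε k i)) (hε_indep : iIndepFun (fun k ω i => ε k i ω) P)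
    (hε_mean : ∀ k i, ∫ ω, ε k i ω ∂P = 0) (k : ℕ) (j : ι) :
    ∫ ω, e k j ω * ε k j ω ∂P = 0 := by
  have hindep := h.indepFun h0 hε_meas hε_indep k j j
  rw [hindep.integral_fun_mul_eq_mul_integral
    (h.measurable h0 hε_meas k j).aestronglyMeasurable (hε_meas k j).aestronglyMeasurable,
    hε_mean, mul_zero]

theorem integral_eq_meanPropagator_mulVec [DecidableEq ι] [IsProbabilityMeasure P]
    (h : IsDiffusionError A r L ε e) (h0 : ∀ i ω, e 0 i ω = e₀ i)
    (he : ∀ k i, Integrable (e k i) P) (hε : ∀ k i, Integrable (ε k i) P)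
    (hε_mean : ∀ k i, ∫ ω, ε k i ω ∂P = 0) (k : ℕ) :
    (fun i => ∫ ω, e k i ω ∂P) = meanPropagator A r k *ᵥ e₀ := by
  induction k with
  | zero =>
    funext i
    simp [h0, meanPropagator]
  | succ k ih =>
    have step : (fun i => ∫ ω, e (k + 1) i ω ∂P) =
        A *ᵥ (diagonal (r k) *ᵥ fun j => ∫ ω, e k j ω ∂P) := by
      funext i
      simp only [h k i, mulVec, dotProduct, diagonal_apply, ite_mul, zero_mul,
        Finset.sum_ite_eq, Finset.mem_univ, if_true]
      have hterm (j : ι) : Integrable (fun ω => A i j * (r k j * e k j ω + L k j * ε k j ω)) P :=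
        (((he k j).const_mul _).add ((hε k j).const_mul _)).const_mul _
      rw [integral_finsetSum _ fun j _ => hterm j]
      refine Finset.sum_congr rfl fun j _ => ?_
      rw [integral_const_mul, integral_add ((he k j).const_mul _) ((hε k j).const_mul _),
        integral_const_mul, integral_const_mul, hε_mean, mul_zero, add_zero]
    rw [step, ih, mulVec_mulVec, mulVec_mulVec, meanPropagator]

theorem tendsto_sum_integral [DecidableEq ι] [IsProbabilityMeasure P]
    (h : IsDiffusionError A r L ε e) (h0 : ∀ i ω, e 0 i ω = e₀ i)
    (he : ∀ k i, Integrable (e k i) P) (hε : ∀ k i, Integrable (ε k i) P)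
    (hε_mean : ∀ k i, ∫ ω, ε k i ω ∂P = 0) {μ : ι → ℝ}
    (hμ : ∀ j, Tendsto (fun k => ∑ i, meanPropagator A r k i j) atTop (𝓝 (μ j))) :
    Tendsto (fun k => ∑ i, ∫ ω, e k i ω ∂P) atTop (𝓝 (∑ j, μ j * e₀ j)) := by
  have hsum (k : ℕ) : ∑ i, ∫ ω, e k i ω ∂P = ∑ j, (∑ i, meanPropagator A r k i j) * e₀ j := by
    simp only [congrFun (h.integral_eq_meanPropagator_mulVec h0 he hε hε_mean k), mulVec,
      dotProduct, Finset.sum_mul]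
    exact Finset.sum_comm
  simp only [hsum]
  exact tendsto_finsetSum _ fun j _ => (hμ j).mul_const _

theorem integral_sum_sq_succ_le (h : IsDiffusionError A r L ε e) (hA : ∀ i j, 0 ≤ A i j)
    (hA_row : ∀ i, ∑ j, A i j = 1) (hA_col : ∀ j, ∑ i, A i j = 1) (hr : ∀ k j, r k j ^ 2 ≤ 1)
    (he : ∀ k i, MemLp (e k i) 2 P) (hε : ∀ k i, MemLp (ε k i) 2 P)
    (hcross : ∀ k j, ∫ ω, e k j ω * ε k j ω ∂P = 0) (k : ℕ) :
    ∫ ω, ∑ i, e (k + 1) i ω ^ 2 ∂P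
      ≤ ∫ ω, ∑ i, e k i ω ^ 2 ∂P + ∑ j, L k j ^ 2 * ∫ ω, ε k j ω ^ 2 ∂P := by
  have hu (j : ι) : MemLp (fun ω => r k j * e k j ω + L k j * ε k j ω) 2 P :=
    ((he k j).const_mul _).add ((hε k j).const_mul _)
  have pointwise (ω : Ω) :
      ∑ i, e (k + 1) i ω ^ 2 ≤ ∑ j, (r k j * e k j ω + L k j * ε k j ω) ^ 2 := by
    simp only [h k _ ω]
    exact sum_sq_mulVec_le_sum_sq hA hA_row hA_col fun j => r k j * e k j ω + L k j * ε k j ω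
  calc ∫ ω, ∑ i, e (k + 1) i ω ^ 2 ∂P
      ≤ ∫ ω, ∑ j, (r k j * e k j ω + L k j * ε k j ω) ^ 2 ∂P :=
        integral_mono (integrable_finsetSum _ fun i _ => (he (k + 1) i).integrable_sq)
          (integrable_finsetSum _ fun j _ => (hu j).integrable_sq) pointwise
    _ = ∑ j, (r k j ^ 2 * ∫ ω, e k j ω ^ 2 ∂P + L k j ^ 2 * ∫ ω, ε k j ω ^ 2 ∂P) := by
        rw [integral_finsetSum _ fun j _ => (hu j).integrable_sq]
        exact Finset.sum_congr rfl fun j _ =>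
          integral_add_sq_of_integral_mul_eq_zero (he k j) (hε k j) (hcross k j) _ _
    _ ≤ ∑ j, (∫ ω, e k j ω ^ 2 ∂P + L k j ^ 2 * ∫ ω, ε k j ω ^ 2 ∂P) := by
        gcongr with j
        exact mul_le_of_le_one_left (integral_nonneg fun ω => sq_nonneg _) (hr k j)
    _ = ∫ ω, ∑ i, e k i ω ^ 2 ∂P + ∑ j, L k j ^ 2 * ∫ ω, ε k j ω ^ 2 ∂P := by
        rw [Finset.sum_add_distrib, integral_finsetSum _ fun i _ => (he k i).integrable_sq]

end IsDiffusionError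

end DiffusionError

theorem diffusion_RLS_scalar_divergence_necessity_general
    {n : ℕ}
    (A : Matrix (Fin n) (Fin n) ℝ)
    (hA_nonneg : ∀ i j, 0 ≤ A i j)
    (hA_row : ∀ i, ∑ j, A i j = 1)
    (hA_col : ∀ j, ∑ i, A i j = 1)
    {Ω : Type} [MeasurableSpace Ω] (P : Measure Ω) [IsProbabilityMeasure P]
    (ε : ℕ → Fin n → Ω → ℝ)
    (hε_meas : ∀ k i, Measurable (ε k i))
    (hε_L2 : ∀ k i, MemLp (ε k i) 2 P)
    (hε_indep : ProbabilityTheory.iIndepFun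
      (fun k => fun ω => fun i : Fin n => ε k i ω) P)
    (M : ℝ)
    (hε_mean : ∀ k i, ∫ ω, ε k i ω ∂P = 0)
    (hε_var : ∀ k i, ∫ ω, (ε k i ω) ^ 2 ∂P < M)
    (θ : ℝ) (φ : ℕ → Fin n → ℝ)
    (hφ_sum : Summable (fun k => ∑ i, (φ k i) ^ 2)) :
    ∃ μ : Fin n → ℝ, (∀ i, 0 < μ i) ∧
      ∀ (θ0 : Fin n → ℝ) (θe : ℕ → Fin n → Ω → ℝ),
        (∀ i ω, θe 0 i ω = θ0 i) →
        (∀ k i ω, θe (k + 1) i ω =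
          ∑ j, A i j * (θe k j ω +
            (φ k j / (1 + ∑ t ∈ Finset.range (k + 1), (φ t j) ^ 2)) *
              ((θ * φ k j + ε k j ω) - θe k j ω * φ k j))) →
        (∑ i, μ i * (θ0 i - θ)) ≠ 0 →
        ((∃ δ : ℝ, 0 < δ ∧ ∀ᶠ k in atTop, δ ≤ ∫ ω, ∑ i, (θe k i ω - θ) ^ 2 ∂P) ∧
          ¬ TendstoInMeasure P
              (fun k ω => Real.sqrt (∑ i, (θe k i ω - θ) ^ 2)) atTop
              (fun _ => (0 : ℝ))) := by
  obtain ⟨ρ, hρ, hρ_le⟩ := exists_pos_le_prod_one_sub_rlsGain_mul φ hφ_sum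
  obtain ⟨μ, hμ_pos, hμ_lim⟩ := exists_pos_tendsto_sum_meanPropagator hA_nonneg hA_col
    (one_sub_rlsGain_mul_nonneg φ) (one_sub_rlsGain_mul_le_one φ) hρ hρ_le
  refine ⟨μ, hμ_pos, fun θ0 θe h0 hrec hs => ?_⟩
  have he := isDiffusionError_of_atc (L := rlsGain φ) hA_row hrec
  have he0 (i : Fin n) (ω : Ω) : θe 0 i ω - θ = θ0 i - θ := by rw [h0]
  have he_L2 := he.memLp he0 hε_L2
  obtain ⟨c, hc, hlow⟩ := exists_pos_eventually_le_integral_sqrt_sum_sq he_L2 hs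
    (he.tendsto_sum_integral he0 (fun k i => (he_L2 k i).integrable one_le_two)
      (fun k i => (hε_L2 k i).integrable one_le_two) hε_mean hμ_lim)
  obtain ⟨B, hB⟩ := exists_le_of_le_add_summable
    (V := fun k => ∫ ω, ∑ i, (θe k i ω - θ) ^ 2 ∂P)
    (fun k => Finset.sum_nonneg fun j _ => by positivity)
    (summable_sum_rlsGain_sq_mul φ hφ_sum (fun k j => integral_nonneg fun ω => sq_nonneg _)
      fun k j => (hε_var k j).le)
    (he.integral_sum_sq_succ_le hA_nonneg hA_row hA_col
      (fun k j => pow_le_one₀ (one_sub_rlsGain_mul_nonneg φ k j) (one_sub_rlsGain_mul_le_one φ k j))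
      he_L2 hε_L2 (he.integral_mul_eq_zero he0 hε_meas hε_indep hε_mean))
  have hX k := memLp_sqrt_sum_sq (he_L2 k)
  refine ⟨⟨c ^ 2, by positivity, hlow.mono fun k hk => ?_⟩,
    not_tendstoInMeasure_zero_of_integral_sq_le hX (B := B) (fun k => ?_) hc ?_⟩
  · calc c ^ 2 ≤ (∫ ω, √(∑ i, (θe k i ω - θ) ^ 2) ∂P) ^ 2 := pow_le_pow_left₀ hc.le hk 2
      _ ≤ ∫ ω, √(∑ i, (θe k i ω - θ) ^ 2) ^ 2 ∂P := sq_integral_le_integral_sq (hX k)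
      _ = ∫ ω, ∑ i, (θe k i ω - θ) ^ 2 ∂P := by simp only [sqrt_sum_sq_sq]
  · simpa only [sqrt_sum_sq_sq] using hB k
  · simpa only [abs_of_nonneg (Real.sqrt_nonneg _)] using hlow

/-- **Remark (necessity part of Theorem 1, scalar diffusion RLS).**
Under Assumptions A1, A2, A3 with `m = 1`: if `Σ_{k=0}^∞ Σ_{i=1}^n φ_{k,i}² < +∞`
(so the sums `Σ_i P_{k+1,i}⁻¹` stay bounded), then there are constants
`μ_1,…,μ_n > 0`, determined by the data `{φ_{k,i}}` and the matrix `A`, such that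
for every choice of initial estimates with `Σ_i μ_i (θ_{0,i} − θ) ≠ 0`, the diffusion
RLS error satisfies `liminf_k E‖Θ̃_k‖² > 0` and `Θ̃_k` does not converge to `0` in
probability. -/
theorem diffusion_RLS_scalar_divergence_necessity
    {n : ℕ} (hn : 1 ≤ n)
    (A : Matrix (Fin n) (Fin n) ℝ)
    (hA_nonneg : ∀ i j, 0 ≤ A i j)
    (hA_row : ∀ i, ∑ j, A i j = 1)
    (hA_col : ∀ j, ∑ i, A i j = 1)
    (hA_prim : ∃ K : ℕ, 1 ≤ K ∧ ∀ i j, 0 < (A ^ K) i j)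
    (hA_AtA_irred : ∀ i j, ∃ k : ℕ, 1 ≤ k ∧ 0 < ((Aᵀ * A) ^ k) i j)
    {Ω : Type} [MeasurableSpace Ω] (P : Measure Ω) [IsProbabilityMeasure P]
    (ε : ℕ → Fin n → Ω → ℝ)
    (hε_meas : ∀ k i, Measurable (ε k i))
    (hε_L2 : ∀ k i, MemLp (ε k i) 2 P)
    (hε_indep : ProbabilityTheory.iIndepFun
      (fun k => fun ω => fun i : Fin n => ε k i ω) P)
    (M : ℝ) (hM : 0 < M)
    (hε_mean : ∀ k i, ∫ ω, ε k i ω ∂P = 0)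
    (hε_var : ∀ k i, ∫ ω, (ε k i ω) ^ 2 ∂P < M)
    (θ : ℝ) (φ : ℕ → Fin n → ℝ)
    (hφ_sum : Summable (fun k => ∑ i, (φ k i) ^ 2)) :
    ∃ μ : Fin n → ℝ, (∀ i, 0 < μ i) ∧
      ∀ (θ0 : Fin n → ℝ) (θe : ℕ → Fin n → Ω → ℝ),
        (∀ i ω, θe 0 i ω = θ0 i) →
        (∀ k i ω, θe (k + 1) i ω =
          ∑ j, A i j * (θe k j ω +
            (φ k j / (1 + ∑ t ∈ Finset.range (k + 1), (φ t j) ^ 2)) *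
              ((θ * φ k j + ε k j ω) - θe k j ω * φ k j))) →
        (∑ i, μ i * (θ0 i - θ)) ≠ 0 →
        ((∃ δ : ℝ, 0 < δ ∧ ∀ᶠ k in atTop, δ ≤ ∫ ω, ∑ i, (θe k i ω - θ) ^ 2 ∂P) ∧
          ¬ TendstoInMeasure P
              (fun k ω => Real.sqrt (∑ i, (θe k i ω - θ) ^ 2)) atTop
              (fun _ => (0 : ℝ))) :=
  diffusion_RLS_scalar_divergence_necessity_general A hA_nonneg hA_row hA_col P ε hε_meas hε_L2
    hε_indep M hε_mean hε_var θ φ hφ_sum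
end

section
/- Let m = 1, let A be an n×n row-stochastic matrix, fix constants c > 0, M > 0 and β ∈ (1/2, 1), and consider the diffusion Robbins–Monro algorithm with L_{k,i} = (k+1)^{-β} φ_{k,i}/(1+φ_{k,i}²), where θ_{0,i} = 0 for all i, φ_{k,i} = √(2c) for all k and i, and the noises satisfy ε_{k,i} = ε_{k,1} for all i, with {ε_{k,1}}_{k≥0} independent, Eε_{k,1} = 0 and Eε_{k,1}² = M. Then liminf_{k→∞} k^β E‖Θ̃_k‖² ≥ nM/(2+4c). -/
/-!
All nodes start from the same estimate and see the same data, so, `A` being row-stochastic, the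
network stays in consensus: every error `θ_{k,i} - θ` equals the error `e_k` of the single-node
recursion `e_{k+1} = (1 - a_k) e_k + γ_k ε_k`, where `a_k = r/(k+1)^β` and `r = 2c/(1+2c)`.
As `e_k` is a fixed linear combination of the uncorrelated noises plus a deterministic bias,
`v_k = n E e_k²` obeys `v_{k+1} = (1 - a_k)² v_k + 2rL/(k+1)^{2β}` with `L = nM/(2+4c)`.
Then `u_k = k^β v_k` satisfies `u_{k+1} ≥ (1 - α_k) u_k + α_k L` with `α_k = 2r/(k+1)^β`, and
`∑ α_k = ∞` makes the products `∏ (1 - α_l)` vanish, which forces `liminf u_k ≥ L`.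
-/

open MeasureTheory Filter Finset

lemma prod_one_sub_le_exp_neg_sum {α : ℕ → ℝ} (s : Finset ℕ)
    (hα1 : ∀ l ∈ s, α l ≤ 1) : ∏ l ∈ s, (1 - α l) ≤ Real.exp (-∑ l ∈ s, α l) := by
  rw [← sum_neg_distrib, Real.exp_sum]
  exact prod_le_prod (fun l hl => by linarith [hα1 l hl]) fun l _ => by
    linarith [Real.add_one_le_exp (-α l)]

lemma tendsto_prod_Ico_one_sub_of_not_summable {α : ℕ → ℝ} {K : ℕ} (hα0 : ∀ l, 0 ≤ α l)
    (hα1 : ∀ l, K ≤ l → α l ≤ 1) (hα : ¬Summable α) :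
    Tendsto (fun k => ∏ l ∈ Ico K k, (1 - α l)) atTop (nhds 0) := by
  have hsum : Tendsto (fun k => ∑ l ∈ Ico K k, α l) atTop atTop := by
    have := ((not_summable_iff_tendsto_nat_atTop_of_nonneg hα0).mp hα).atTop_add
      (tendsto_const_nhds (x := -∑ l ∈ range K, α l))
    refine this.congr' ?_
    filter_upwards [eventually_ge_atTop K] with k hk
    rw [sum_Ico_eq_sub _ hk]
    ring
  refine tendsto_of_tendsto_of_tendsto_of_le_of_le' tendsto_const_nhds
    (Real.tendsto_exp_atBot.comp (tendsto_neg_atTop_atBot.comp hsum)) ?_ ?_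
  · filter_upwards with k
    exact prod_nonneg fun l hl => by linarith [hα1 l (mem_Ico.mp hl).1]
  · filter_upwards with k
    exact prod_one_sub_le_exp_neg_sum _ fun l hl => hα1 l (mem_Ico.mp hl).1

lemma eventually_sub_le_of_relaxation_step {α u : ℕ → ℝ} {T : ℝ} (hα0 : ∀ k, 0 ≤ α k)
    (hα1 : ∀ᶠ k in atTop, α k ≤ 1) (hα : ¬Summable α)
    (hstep : ∀ k, (1 - α k) * u k + α k * T ≤ u (k + 1)) :
    ∀ δ > 0, ∀ᶠ k in atTop, T - δ ≤ u k := by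
  intro δ hδ
  obtain ⟨K, hK⟩ := eventually_atTop.mp hα1
  have hgap : ∀ k, K ≤ k → T - u k ≤ (∏ l ∈ Ico K k, (1 - α l)) * (T - u K) := by
    intro k hk
    induction k, hk using Nat.le_induction with
    | base => simp
    | succ k hk ih =>
      rw [prod_Ico_succ_top hk]
      nlinarith [hstep k, hK k hk]
  have hsmall : ∀ᶠ k in atTop, (∏ l ∈ Ico K k, (1 - α l)) * (T - u K) < δ := by
    refine (tendsto_prod_Ico_one_sub_of_not_summable hα0 hK hα).mul_const (T - u K)
      |>.eventually_lt_const ?_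
    simpa using hδ
  filter_upwards [eventually_ge_atTop K, hsmall] with k hk hk'
  linarith [hgap k hk]

lemma not_summable_div_add_one_rpow {r β : ℝ} (hr : r ≠ 0) (hβ : β ≤ 1) :
    ¬Summable fun k : ℕ => r / ((k : ℝ) + 1) ^ β := by
  intro h
  have h1 : Summable fun k : ℕ => 1 / |(k : ℝ) + 1| ^ β := by
    refine (h.div_const r).congr fun k => ?_
    rw [abs_of_pos (by positivity), div_div_cancel_left' hr, one_div]
  linarith [(Real.summable_one_div_nat_add_rpow 1 β).mp h1]

lemma rpow_mul_relaxation_step_of_sq_recursion {r L β : ℝ} {v : ℕ → ℝ} (hβ : 0 ≤ β)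
    (hv : ∀ k, 0 ≤ v k)
    (hrec : ∀ k : ℕ, (1 - r / ((k : ℝ) + 1) ^ β) ^ 2 * v k + 2 * r * L / (((k : ℝ) + 1) ^ β) ^ 2
      ≤ v (k + 1)) (k : ℕ) :
    (1 - 2 * r / ((k : ℝ) + 1) ^ β) * ((k : ℝ) ^ β * v k) + 2 * r / ((k : ℝ) + 1) ^ β * L
      ≤ ((k + 1 : ℕ) : ℝ) ^ β * v (k + 1) := by
  set p := ((k : ℝ) + 1) ^ β
  have hp : 0 < p := by positivity
  have hqp : (k : ℝ) ^ β ≤ p := Real.rpow_le_rpow (by positivity) (by linarith) hβ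
  have hq : 0 ≤ (k : ℝ) ^ β := by positivity
  have hsq : 1 - 2 * r / p ≤ (1 - r / p) ^ 2 := by
    rw [mul_div_assoc]
    nlinarith [sq_nonneg (r / p)]
  calc (1 - 2 * r / p) * ((k : ℝ) ^ β * v k) + 2 * r / p * L
      ≤ (k : ℝ) ^ β * ((1 - r / p) ^ 2 * v k) + 2 * r / p * L := by
        nlinarith [mul_le_mul_of_nonneg_left hsq (mul_nonneg hq (hv k))]
    _ ≤ p * ((1 - r / p) ^ 2 * v k) + p * (2 * r * L / p ^ 2) := by
        have : p * (2 * r * L / p ^ 2) = 2 * r / p * L := by field_simp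
        rw [this]
        gcongr
        exact mul_nonneg (sq_nonneg _) (hv k)
    _ ≤ ((k + 1 : ℕ) : ℝ) ^ β * v (k + 1) := by
        push_cast
        rw [← mul_add]
        exact mul_le_mul_of_nonneg_left (hrec k) hp.le

theorem eventually_sub_le_rpow_mul_of_sq_recursion {r L β : ℝ} {v : ℕ → ℝ} (hr : 0 < r)
    (hβ0 : 0 < β) (hβ1 : β ≤ 1) (hv : ∀ k, 0 ≤ v k)
    (hrec : ∀ k : ℕ, (1 - r / ((k : ℝ) + 1) ^ β) ^ 2 * v k + 2 * r * L / (((k : ℝ) + 1) ^ β) ^ 2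
      ≤ v (k + 1)) :
    ∀ δ > 0, ∀ᶠ k : ℕ in atTop, L - δ ≤ (k : ℝ) ^ β * v k := by
  refine eventually_sub_le_of_relaxation_step (α := fun k : ℕ => 2 * r / ((k : ℝ) + 1) ^ β)
    (fun k => by positivity) ?_ (not_summable_div_add_one_rpow (by positivity) hβ1)
    (rpow_mul_relaxation_step_of_sq_recursion hβ0.le hv hrec)
  have hα : Tendsto (fun k : ℕ => 2 * r / ((k : ℝ) + 1) ^ β) atTop (nhds 0) :=
    tendsto_const_nhds.div_atTop <| (tendsto_rpow_atTop hβ0).comp <|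
      tendsto_atTop_add_const_right _ 1 tendsto_natCast_atTop_atTop
  exact hα.eventually_le_const one_pos

def impulseResponse (ρ g : ℕ → ℝ) (k j : ℕ) : ℝ := g j * ∏ l ∈ Ico (j + 1) k, ρ l

def linearSolution (ρ g : ℕ → ℝ) (b : ℝ) (x : ℕ → ℝ) (k : ℕ) : ℝ :=
  ∑ j ∈ range k, impulseResponse ρ g k j * x j + b * ∏ l ∈ range k, ρ l

section LinearRecursion

variable (ρ g : ℕ → ℝ) {k j : ℕ}

lemma impulseResponse_succ_of_lt (hj : j < k) :
    impulseResponse ρ g (k + 1) j = ρ k * impulseResponse ρ g k j := by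
  rw [impulseResponse, impulseResponse, prod_Ico_succ_top hj]
  ring

lemma impulseResponse_succ_self : impulseResponse ρ g (k + 1) k = g k := by
  simp [impulseResponse]

lemma linearSolution_zero (b : ℝ) (x : ℕ → ℝ) : linearSolution ρ g b x 0 = b := by
  simp [linearSolution]

lemma linearSolution_succ (b : ℝ) (x : ℕ → ℝ) (k : ℕ) :
    linearSolution ρ g b x (k + 1) = ρ k * linearSolution ρ g b x k + g k * x k := by
  simp only [linearSolution, sum_range_succ, prod_range_succ, impulseResponse_succ_self, mul_add,
    mul_sum]
  rw [sum_congr rfl fun j hj => by rw [impulseResponse_succ_of_lt ρ g (mem_range.mp hj)]]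
  ring_nf

lemma sum_sq_impulseResponse_succ (k : ℕ) :
    ∑ j ∈ range (k + 1), impulseResponse ρ g (k + 1) j ^ 2
      = ρ k ^ 2 * ∑ j ∈ range k, impulseResponse ρ g k j ^ 2 + g k ^ 2 := by
  rw [sum_range_succ, impulseResponse_succ_self, mul_sum]
  congr 1
  exact sum_congr rfl fun j hj => by rw [impulseResponse_succ_of_lt ρ g (mem_range.mp hj)]; ring

end LinearRecursion

lemma eq_of_common_update_of_row_sum_eq_one {ι : Type*} [Fintype ι] {A : Matrix ι ι ℝ}
    (hA : ∀ i, ∑ j, A i j = 1) {F : ℕ → ℝ → ℝ} {x : ℕ → ℝ} (hx : ∀ k, x (k + 1) = F k (x k))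
    {y : ℕ → ι → ℝ} (h0 : ∀ i, y 0 i = x 0) (hy : ∀ k i, y (k + 1) i = ∑ j, A i j * F k (y k j)) :
    ∀ k i, y k i = x k := by
  intro k
  induction k with
  | zero => exact h0
  | succ k ih => intro i; simp only [hy, ih, ← sum_mul, hA, one_mul, hx]

section Noise

variable {Ω : Type*} [MeasurableSpace Ω] {P : Measure Ω} {ε : ℕ → Ω → ℝ} {M : ℝ}

lemma integral_noise_mul (hL2 : ∀ k, MemLp (ε k) 2 P) (hindep : ProbabilityTheory.iIndepFun ε P)
    (hmean : ∀ k, ∫ ω, ε k ω ∂P = 0) (hvar : ∀ k, ∫ ω, ε k ω ^ 2 ∂P = M) (j j' : ℕ) :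
    ∫ ω, ε j ω * ε j' ω ∂P = if j = j' then M else 0 := by
  split_ifs with h
  · subst h
    simpa only [sq] using hvar j
  · rw [(hindep.indepFun h).integral_fun_mul_eq_mul_integral (hL2 j).aestronglyMeasurable
      (hL2 j').aestronglyMeasurable, hmean j, zero_mul]

lemma integral_sq_sum_mul_noise (hL2 : ∀ k, MemLp (ε k) 2 P)
    (hindep : ProbabilityTheory.iIndepFun ε P)
    (hmean : ∀ k, ∫ ω, ε k ω ∂P = 0) (hvar : ∀ k, ∫ ω, ε k ω ^ 2 ∂P = M)
    (s : Finset ℕ) (d : ℕ → ℝ) :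
    ∫ ω, (∑ j ∈ s, d j * ε j ω) ^ 2 ∂P = M * ∑ j ∈ s, d j ^ 2 := by
  have hexpand : ∀ ω, (∑ j ∈ s, d j * ε j ω) ^ 2
      = ∑ j ∈ s, ∑ j' ∈ s, d j * d j' * (ε j ω * ε j' ω) := fun ω => by
    rw [sq, sum_mul_sum]
    exact sum_congr rfl fun _ _ => sum_congr rfl fun _ _ => by ring
  have hprod : ∀ j j', Integrable (fun ω => ε j ω * ε j' ω) P := fun j j' =>
    (hL2 j).integrable_mul (hL2 j')
  simp_rw [hexpand]
  rw [integral_finsetSum _ fun j _ => integrable_finsetSum _ fun j' _ =>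
    (hprod j j').const_mul _, mul_sum]
  refine sum_congr rfl fun j hj => ?_
  rw [integral_finsetSum _ fun j' _ => (hprod j j').const_mul _]
  simp_rw [integral_const_mul, integral_noise_mul hL2 hindep hmean hvar, mul_ite, mul_zero,
    sum_ite_eq, if_pos hj]
  ring

lemma integral_sq_sum_mul_noise_add [IsProbabilityMeasure P] (hL2 : ∀ k, MemLp (ε k) 2 P)
    (hindep : ProbabilityTheory.iIndepFun ε P)
    (hmean : ∀ k, ∫ ω, ε k ω ∂P = 0) (hvar : ∀ k, ∫ ω, ε k ω ^ 2 ∂P = M)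
    (s : Finset ℕ) (d : ℕ → ℝ) (b : ℝ) :
    ∫ ω, (∑ j ∈ s, d j * ε j ω + b) ^ 2 ∂P = M * ∑ j ∈ s, d j ^ 2 + b ^ 2 := by
  have hS : MemLp (fun ω => ∑ j ∈ s, d j * ε j ω) 2 P :=
    memLp_finsetSum s fun j _ => (hL2 j).const_mul _
  have hS1 := hS.integrable one_le_two
  have hmeanS : ∫ ω, ∑ j ∈ s, d j * ε j ω ∂P = 0 := by
    rw [integral_finsetSum _ fun j _ => ((hL2 j).integrable one_le_two).const_mul _]
    simp [integral_const_mul, hmean]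
  have hexpand : ∀ ω, (∑ j ∈ s, d j * ε j ω + b) ^ 2
      = (∑ j ∈ s, d j * ε j ω) ^ 2 + (2 * b * ∑ j ∈ s, d j * ε j ω + b ^ 2) := fun ω => by ring
  simp_rw [hexpand]
  rw [integral_add hS.integrable_sq ((hS1.const_mul _).fun_add (integrable_const _)),
    integral_add (hS1.const_mul _) (integrable_const _), integral_const_mul, hmeanS,
    integral_sq_sum_mul_noise hL2 hindep hmean hvar]
  simp

lemma integral_sq_linearSolution_succ [IsProbabilityMeasure P] (hL2 : ∀ k, MemLp (ε k) 2 P)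
    (hindep : ProbabilityTheory.iIndepFun ε P)
    (hmean : ∀ k, ∫ ω, ε k ω ∂P = 0) (hvar : ∀ k, ∫ ω, ε k ω ^ 2 ∂P = M)
    (ρ g : ℕ → ℝ) (b : ℝ) (k : ℕ) :
    ∫ ω, linearSolution ρ g b (ε · ω) (k + 1) ^ 2 ∂P
      = ρ k ^ 2 * ∫ ω, linearSolution ρ g b (ε · ω) k ^ 2 ∂P + M * g k ^ 2 := by
  simp only [linearSolution]
  rw [integral_sq_sum_mul_noise_add hL2 hindep hmean hvar,
    integral_sq_sum_mul_noise_add hL2 hindep hmean hvar, sum_sq_impulseResponse_succ,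
    prod_range_succ]
  ring

end Noise

theorem diffusion_RM_rate_lower_bound_example_general
    {n : ℕ}
    (A : Matrix (Fin n) (Fin n) ℝ)
    (hA_row : ∀ i, ∑ j, A i j = 1)
    {Ω : Type} [MeasurableSpace Ω] (P : Measure Ω) [IsProbabilityMeasure P]
    (ε : ℕ → Ω → ℝ)
    (hε_L2 : ∀ k, MemLp (ε k) 2 P)
    (hε_indep : ProbabilityTheory.iIndepFun ε P)
    (c M : ℝ) (hc : 0 < c)
    (hε_mean : ∀ k, ∫ ω, ε k ω ∂P = 0)
    (hε_var : ∀ k, ∫ ω, (ε k ω) ^ 2 ∂P = M)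
    (β : ℝ) (hβ : 1 / 2 < β ∧ β < 1)
    (θ : ℝ)
    (θe : ℕ → Fin n → Ω → ℝ)
    (hinit : ∀ i ω, θe 0 i ω = 0)
    (hrec : ∀ k i ω, θe (k + 1) i ω =
      ∑ j, A i j * (θe k j ω +
        ((1 / ((k : ℝ) + 1) ^ β) * Real.sqrt (2 * c) / (1 + 2 * c)) *
          ((θ * Real.sqrt (2 * c) + ε k ω) - θe k j ω * Real.sqrt (2 * c)))) :
    ∀ δ : ℝ, 0 < δ → ∀ᶠ k : ℕ in atTop,
      (n : ℝ) * M / (2 + 4 * c) - δ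
        ≤ (k : ℝ) ^ β * ∫ ω, ∑ i, (θe k i ω - θ) ^ 2 ∂P := by
  set s := Real.sqrt (2 * c)
  have hs : s ^ 2 = 2 * c := Real.sq_sqrt (by positivity)
  set γ : ℕ → ℝ := fun k => (1 / ((k : ℝ) + 1) ^ β) * s / (1 + 2 * c)
  set ρ : ℕ → ℝ := fun k => 1 - γ k * s
  set e : ℕ → Ω → ℝ := fun k ω => linearSolution ρ γ (-θ) (ε · ω) k
  have hcons : ∀ k i ω, θe k i ω = θ + e k ω := fun k i ω =>
    eq_of_common_update_of_row_sum_eq_one hA_row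
      (F := fun k t => t + γ k * ((θ * s + ε k ω) - t * s)) (x := fun k => θ + e k ω)
      (y := fun k i => θe k i ω)
      (fun k => by simp only [e, linearSolution_succ, ρ]; ring)
      (fun i => by simp only [e, linearSolution_zero, hinit]; ring) (fun k i => hrec k i ω) k i
  have hmse : ∀ k, ∫ ω, ∑ i, (θe k i ω - θ) ^ 2 ∂P = n * ∫ ω, e k ω ^ 2 ∂P := fun k => by
    simp [hcons, integral_const_mul]
  have hρ : ∀ k : ℕ, ρ k = 1 - 2 * c / (1 + 2 * c) / ((k : ℝ) + 1) ^ β := fun k => by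
    simp only [ρ, γ]
    rw [← hs]
    ring
  refine eventually_sub_le_rpow_mul_of_sq_recursion (r := 2 * c / (1 + 2 * c)) (by positivity)
    (by linarith [hβ.1]) hβ.2.le (fun k => integral_nonneg fun ω => by positivity) fun k => ?_
  rw [hmse, hmse, integral_sq_linearSolution_succ hε_L2 hε_indep hε_mean hε_var, ← hρ]
  have hgain : (n : ℝ) * (M * γ k ^ 2)
      = 2 * (2 * c / (1 + 2 * c)) * (n * M / (2 + 4 * c)) / (((k : ℝ) + 1) ^ β) ^ 2 := by
    have hp : 0 < ((k : ℝ) + 1) ^ β := by positivity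
    simp only [γ, div_pow, mul_pow, hs]
    field_simp
    ring
  rw [mul_add, hgain, mul_left_comm]

/-- **Remark (tightness of the mean-square rate of the diffusion Robbins–Monro
algorithm).**  Let `m = 1`, let `A` be row-stochastic, fix `c > 0`, `M > 0` and
`β ∈ (1/2, 1)`, and run the diffusion Robbins–Monro algorithm with gains
`L_{k,i} = (k+1)^{-β} φ_{k,i}/(1+φ_{k,i}²)`, zero initial estimates,
regressors `φ_{k,i} = √(2c)` and noises `ε_{k,i} = ε_{k,1}` for all `i`, where
`{ε_{k,1}}` are independent with mean `0` and variance `M`.  Then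
`liminf_{k→∞} k^β E‖Θ̃_k‖² ≥ nM/(2+4c)`
(`liminf ≥ L` is expressed as: for every `δ > 0`, eventually `≥ L − δ`). -/
theorem diffusion_RM_rate_lower_bound_example
    {n : ℕ} (hn : 1 ≤ n)
    (A : Matrix (Fin n) (Fin n) ℝ)
    (hA_nonneg : ∀ i j, 0 ≤ A i j)
    (hA_row : ∀ i, ∑ j, A i j = 1)
    {Ω : Type} [MeasurableSpace Ω] (P : Measure Ω) [IsProbabilityMeasure P]
    (ε : ℕ → Ω → ℝ)
    (hε_meas : ∀ k, Measurable (ε k))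
    (hε_L2 : ∀ k, MemLp (ε k) 2 P)
    (hε_indep : ProbabilityTheory.iIndepFun ε P)
    (c M : ℝ) (hc : 0 < c) (hM : 0 < M)
    (hε_mean : ∀ k, ∫ ω, ε k ω ∂P = 0)
    (hε_var : ∀ k, ∫ ω, (ε k ω) ^ 2 ∂P = M)
    (β : ℝ) (hβ : 1 / 2 < β ∧ β < 1)
    (θ : ℝ)
    (θe : ℕ → Fin n → Ω → ℝ)
    (hinit : ∀ i ω, θe 0 i ω = 0)
    (hrec : ∀ k i ω, θe (k + 1) i ω =
      ∑ j, A i j * (θe k j ω +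
        ((1 / ((k : ℝ) + 1) ^ β) * Real.sqrt (2 * c) / (1 + 2 * c)) *
          ((θ * Real.sqrt (2 * c) + ε k ω) - θe k j ω * Real.sqrt (2 * c)))) :
    ∀ δ : ℝ, 0 < δ → ∀ᶠ k : ℕ in atTop,
      (n : ℝ) * M / (2 + 4 * c) - δ
        ≤ (k : ℝ) ^ β * ∫ ω, ∑ i, (θe k i ω - θ) ^ 2 ∂P :=
  diffusion_RM_rate_lower_bound_example_general A hA_row P ε hε_L2 hε_indep c M hc hε_mean hε_var β
    hβ θ θe hinit hrec
end

section
/- Let {e_k}_{k≥0} be a sequence of nonnegative real numbers. Suppose there exist nonnegative real sequences {a_k} and {b_k} with Σ_{k=0}^∞ a_k = +∞ and Σ_{k=0}^∞ b_k < +∞ such that e_{k+1} ≤ (1 − a_k)e_k + b_k for all k ≥ 0. Then lim_{k→∞} e_k = 0. -/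
/-- **Lemma (sequence convergence, part (ii)).**
If `{e_k}` is a sequence of nonnegative reals and there are nonnegative sequences
`{a_k}`, `{b_k}` with `Σ a_k = +∞` and `Σ b_k < +∞` such that
`e_{k+1} ≤ (1 - a_k) e_k + b_k` for all `k`, then `e_k → 0`. -/
theorem diffusion_seq_lemma_ii
    (e a b : ℕ → ℝ)
    (he : ∀ k, 0 ≤ e k)
    (ha : ∀ k, 0 ≤ a k)
    (hb : ∀ k, 0 ≤ b k)
    (ha_div : ¬ Summable a)
    (hb_sum : Summable b)
    (hrec : ∀ k, e (k + 1) ≤ (1 - a k) * e k + b k) :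
    Filter.Tendsto e Filter.atTop (nhds 0) := by
  rw [Metric.tendsto_atTop]
  intro ε hε
  -- choose N with tail sum of b less than ε/4
  have htail : Filter.Tendsto (fun N => ∑' j, b (j + N)) Filter.atTop (nhds 0) :=
    tendsto_sum_nat_add b
  have hN : ∃ N, ∑' j, b (j + N) < ε / 4 := by
    have := (htail.eventually (gt_mem_nhds (by linarith : (0:ℝ) < ε / 4))).exists
    exact this
  obtain ⟨N, hNtail⟩ := hN
  have hbN : Summable (fun j => b (j + N)) := (summable_nat_add_iff N).mpr hb_sum
  have hbpart : ∀ m : ℕ, ∑ j ∈ Finset.range m, b (N + j) ≤ ε / 4 := by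
    intro m
    have h1 : ∑ j ∈ Finset.range m, b (N + j) = ∑ j ∈ Finset.range m, b (j + N) := by
      apply Finset.sum_congr rfl; intro j _; rw [add_comm]
    rw [h1]
    calc ∑ j ∈ Finset.range m, b (j + N) ≤ ∑' j, b (j + N) :=
          Summable.sum_le_tsum _ (fun j _ => hb _) hbN
      _ ≤ ε / 4 := le_of_lt hNtail
  -- step 1 : there exists k ≥ N with e k < ε/2
  have hstep1 : ∃ k, N ≤ k ∧ e k < ε / 2 := by
    by_contra hcon
    push_neg at hcon
    have hge : ∀ k, N ≤ k → ε / 2 ≤ e k := fun k hk => hcon k hk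
    have key : ∀ m : ℕ, e (N + m) ≤ e N - (ε / 2) * ∑ j ∈ Finset.range m, a (N + j)
        + ∑ j ∈ Finset.range m, b (N + j) := by
      intro m
      induction m with
      | zero => simp
      | succ m ih =>
        have h1 := hrec (N + m)
        have h2 : ε / 2 ≤ e (N + m) := hge _ (Nat.le_add_right _ _)
        have h3 : 0 ≤ a (N + m) := ha _
        have h4 : e (N + m + 1) ≤ e (N + m) - a (N + m) * (ε / 2) + b (N + m) := by
          nlinarith
        rw [Finset.sum_range_succ, Finset.sum_range_succ]
        have : N + (m + 1) = N + m + 1 := by ring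
        rw [this]
        nlinarith
    -- partial sums of a (N + ·) tend to infinity
    have haN : ¬ Summable (fun j => a (N + j)) := by
      intro hs
      apply ha_div
      have : Summable (fun j => a (j + N)) := by
        apply hs.congr; intro j; rw [add_comm]
      exact (summable_nat_add_iff N).mp this
    have hatend : Filter.Tendsto (fun m => ∑ j ∈ Finset.range m, a (N + j))
        Filter.atTop Filter.atTop := by
      exact (not_summable_iff_tendsto_nat_atTop_of_nonneg (fun j => ha _)).mp haN
    obtain ⟨m, hm⟩ := (hatend.eventually_gt_atTop ((e N + ε / 4) / (ε / 2))).exists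
    have h5 := key m
    have h6 := hbpart m
    have h7 : ε / 2 ≤ e (N + m) := hge _ (Nat.le_add_right _ _)
    have h8 : (ε / 2) * ((e N + ε / 4) / (ε / 2)) ≤ (ε / 2) * ∑ j ∈ Finset.range m, a (N + j) := by
      apply le_of_lt (mul_lt_mul_of_pos_left hm (by linarith))
    rw [mul_div_cancel₀ _ (by linarith : (ε:ℝ)/2 ≠ 0)] at h8
    linarith
  obtain ⟨k, hkN, hk⟩ := hstep1
  -- step 2 : for all m, e (k + m) < ε
  refine ⟨k, fun n hn => ?_⟩
  obtain ⟨m, rfl⟩ := Nat.exists_eq_add_of_le hn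
  have key2 : ∀ m : ℕ, e (k + m) ≤ e k + ∑ j ∈ Finset.range m, b (k + j) := by
    intro m
    induction m with
    | zero => simp
    | succ m ih =>
      have h1 := hrec (k + m)
      have h2 := he (k + m)
      have h3 := ha (k + m)
      rw [Finset.sum_range_succ]
      have : k + (m + 1) = k + m + 1 := by ring
      rw [this]
      nlinarith
  have hbk : ∑ j ∈ Finset.range m, b (k + j) ≤ ε / 4 := by
    have h1 : ∀ j, k + j = N + ((k - N) + j) := by
      intro j; omega
    calc ∑ j ∈ Finset.range m, b (k + j)
        ≤ ∑ j ∈ Finset.range ((k - N) + m), b (N + j) := by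
          have : ∑ j ∈ Finset.range m, b (k + j)
              = ∑ j ∈ Finset.Ico (k - N) ((k - N) + m), b (N + j) := by
            rw [Finset.sum_Ico_eq_sum_range]
            simp only [add_tsub_cancel_left]
            apply Finset.sum_congr rfl
            intro j _
            congr 1
            omega
          rw [this]
          apply Finset.sum_le_sum_of_subset_of_nonneg
          · intro x hx
            simp only [Finset.mem_Ico, Finset.mem_range] at *
            omega
          · intro i _ _; exact hb _
      _ ≤ ε / 4 := hbpart _
  have := key2 m
  have h9 := he (k + m)
  rw [Real.dist_eq, sub_zero, abs_of_nonneg h9]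
  linarith
end

section
/- Let (Ω, F, P) be a probability space with a filtration {G_k}_{k≥0}, and let {e_k}_{k≥0} and {d_k}_{k≥0} be nonnegative, integrable processes adapted to {G_k}. Suppose there are nonnegative constants b_k with Σ_{k=0}^∞ b_k < +∞ such that E[e_{k+1} | G_k] ≤ e_k + b_k − d_k almost surely for every k ≥ 0. Then Σ_{k=0}^∞ d_k < +∞ almost surely. If in addition lim_{k→∞} E e_k = 0, then e_k → 0 almost surely. -/
/-!
Compensate `e` by the dissipation already spent and the budget still to come: the process
`x k = e k + ∑_{j<k} d j + ∑_{j≥k} b j` is a nonnegative supermartingale, hence converges almost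
surely. Since the partial sums of `d` are bounded by `x`, the series `∑ d k` converges, and then
`e k = x k - ∑_{j<k} d j - ∑_{j≥k} b j` converges almost surely as well. If `E e_k → 0`, then
`e_k → 0` in `L¹`, so a subsequence tends to `0` almost surely, which identifies the limit.
-/

open MeasureTheory Filter Topology Finset

namespace MeasureTheory

variable {Ω : Type*} {m0 : MeasurableSpace Ω} {μ : Measure Ω}

theorem eLpNorm_one_eq_ofReal_integral_of_nonneg {f : Ω → ℝ} (hf : Integrable f μ)
    (hf_nonneg : ∀ ω, 0 ≤ f ω) : eLpNorm f 1 μ = ENNReal.ofReal (∫ ω, f ω ∂μ) := by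
  rw [eLpNorm_one_eq_lintegral_enorm,
    ofReal_integral_eq_lintegral_ofReal hf (Eventually.of_forall hf_nonneg)]
  exact lintegral_congr fun ω => Real.enorm_of_nonneg (hf_nonneg ω)

theorem Supermartingale.exists_ae_tendsto_of_nonneg [IsFiniteMeasure μ] {ℱ : Filtration ℕ m0}
    {f : ℕ → Ω → ℝ} (hf : Supermartingale f ℱ μ) (hf_nonneg : ∀ n ω, 0 ≤ f n ω) :
    ∀ᵐ ω ∂μ, ∃ c, Tendsto (fun n => f n ω) atTop (𝓝 c) := by
  have hbdd : ∀ n, eLpNorm (-f n) 1 μ ≤ (∫ ω, f 0 ω ∂μ).toNNReal := fun n => by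
    rw [eLpNorm_neg, eLpNorm_one_eq_ofReal_integral_of_nonneg (hf.integrable n) (hf_nonneg n)]
    refine ENNReal.ofReal_le_ofReal ?_
    simpa only [setIntegral_univ] using hf.setIntegral_le (Nat.zero_le n) MeasurableSet.univ
  filter_upwards [hf.neg.exists_ae_tendsto_of_bdd hbdd] with ω ⟨c, hc⟩
  exact ⟨-c, by simpa using hc.neg⟩

theorem ae_tendsto_zero_of_tendsto_integral_of_nonneg {f : ℕ → Ω → ℝ}
    (hf_nonneg : ∀ n ω, 0 ≤ f n ω) (hf_int : ∀ n, Integrable (f n) μ)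
    (hf_conv : ∀ᵐ ω ∂μ, ∃ c, Tendsto (fun n => f n ω) atTop (𝓝 c))
    (hf_integral : Tendsto (fun n => ∫ ω, f n ω ∂μ) atTop (𝓝 0)) :
    ∀ᵐ ω ∂μ, Tendsto (fun n => f n ω) atTop (𝓝 0) := by
  have hL1 : Tendsto (fun n => eLpNorm (f n - 0) 1 μ) atTop (𝓝 0) := by
    simp_rw [sub_zero, eLpNorm_one_eq_ofReal_integral_of_nonneg (hf_int _) (hf_nonneg _)]
    simpa using ENNReal.tendsto_ofReal hf_integral
  obtain ⟨ns, hns, hns_zero⟩ := (tendstoInMeasure_of_tendsto_eLpNorm one_ne_zero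
    (fun n => (hf_int n).aestronglyMeasurable) aestronglyMeasurable_zero hL1).exists_seq_tendsto_ae
  filter_upwards [hf_conv, hns_zero] with ω ⟨c, hc⟩ hω
  obtain rfl : c = 0 := tendsto_nhds_unique (hc.comp hns.tendsto_atTop) hω
  exact hc

section Compensator

variable (d : ℕ → Ω → ℝ) (b : ℕ → ℝ)

noncomputable def compensator (k : ℕ) (ω : Ω) : ℝ :=
  ∑ j ∈ range k, d j ω + ∑' j, b (j + k)

variable {d b}

theorem compensator_succ (hb : Summable b) (k : ℕ) (ω : Ω) :
    compensator d b (k + 1) ω = compensator d b k ω + d k ω - b k := by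
  have h := (hb.sum_add_tsum_nat_add k).trans (hb.sum_add_tsum_nat_add (k + 1)).symm
  rw [sum_range_succ] at h
  simp only [compensator, sum_range_succ]
  linarith

theorem compensator_nonneg (hd : ∀ k ω, 0 ≤ d k ω) (hb : ∀ k, 0 ≤ b k) (k : ℕ) (ω : Ω) :
    0 ≤ compensator d b k ω :=
  add_nonneg (sum_nonneg fun j _ => hd j ω) (tsum_nonneg fun _ => hb _)

theorem sum_range_le_compensator (hb : ∀ k, 0 ≤ b k) (k : ℕ) (ω : Ω) :
    ∑ j ∈ range k, d j ω ≤ compensator d b k ω :=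
  le_add_of_nonneg_right (tsum_nonneg fun _ => hb _)

theorem tendsto_compensator {ω : Ω} (hd : Summable fun k => d k ω) :
    Tendsto (fun k => compensator d b k ω) atTop (𝓝 (∑' k, d k ω)) := by
  simpa [compensator] using hd.hasSum.tendsto_sum_nat.add (tendsto_sum_nat_add b)

theorem stronglyMeasurable_compensator {G : Filtration ℕ m0} (hd : StronglyAdapted G d)
    {i k : ℕ} (hk : k ≤ i + 1) : StronglyMeasurable[G i] (compensator d b k) :=
  (stronglyMeasurable_fun_sum _ fun j hj => (hd j).mono
    (G.mono (by have := mem_range.mp hj; omega))).add stronglyMeasurable_const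

theorem supermartingale_add_compensator [IsFiniteMeasure μ] {G : Filtration ℕ m0}
    {e : ℕ → Ω → ℝ} (he : StronglyAdapted G e) (hd : StronglyAdapted G d)
    (he_int : ∀ k, Integrable (e k) μ) (hd_int : ∀ k, Integrable (d k) μ) (hb : Summable b)
    (hrec : ∀ k, μ[e (k + 1) | G k] ≤ᵐ[μ] fun ω => e k ω + b k - d k ω) :
    Supermartingale (e + compensator d b) G μ := by
  have hc_int : ∀ k, Integrable (compensator d b k) μ := fun k =>
    (integrable_finsetSum _ fun j _ => hd_int j).add (integrable_const _)
  refine supermartingale_nat (fun k => (he k).add (stronglyMeasurable_compensator hd k.le_succ))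
    (fun k => (he_int k).add (hc_int k)) fun k => ?_
  have hc_succ : μ[compensator d b (k + 1) | G k] = compensator d b (k + 1) :=
    condExp_of_stronglyMeasurable (G.le k) (stronglyMeasurable_compensator hd le_rfl) (hc_int _)
  filter_upwards [condExp_add (he_int (k + 1)) (hc_int (k + 1)) (G k), hrec k]
    with ω h_add h_rec
  rw [Pi.add_apply, h_add, Pi.add_apply, hc_succ, compensator_succ hb]
  simp only [Pi.add_apply]
  linarith

end Compensator

end MeasureTheory

theorem summable_of_sum_range_le_of_tendsto {f u : ℕ → ℝ} {c : ℝ} (hf : ∀ n, 0 ≤ f n)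
    (hu : Tendsto u atTop (𝓝 c)) (hfu : ∀ n, ∑ i ∈ range n, f i ≤ u n) : Summable f := by
  obtain ⟨C, hC⟩ := hu.bddAbove_range
  exact summable_of_sum_range_le hf fun n => (hfu n).trans (hC ⟨n, rfl⟩)

/-- **Lemma (almost-sure convergence of nonnegative supermartingale-like processes).**
Let `(Ω, F, P)` be a probability space with a filtration `{G_k}` and let `{e_k}` and
`{d_k}` be nonnegative integrable processes adapted to `{G_k}`.  If there are
nonnegative constants `b_k` with `Σ b_k < ∞` such that
`E[e_{k+1} | G_k] ≤ e_k + b_k − d_k` a.s. for every `k`, then `Σ_k d_k < +∞` almost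
surely; if in addition `E e_k → 0`, then `e_k → 0` almost surely. -/
theorem diffusion_stochastic_lemma
    {Ω : Type*} {m0 : MeasurableSpace Ω} (P : Measure Ω) [IsProbabilityMeasure P]
    (G : Filtration ℕ m0)
    (e d : ℕ → Ω → ℝ) (b : ℕ → ℝ)
    (he_nonneg : ∀ k, ∀ ω, 0 ≤ e k ω)
    (hd_nonneg : ∀ k, ∀ ω, 0 ≤ d k ω)
    (he_adapted : Adapted G e)
    (hd_adapted : Adapted G d)
    (he_int : ∀ k, Integrable (e k) P)
    (hd_int : ∀ k, Integrable (d k) P)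
    (hb_nonneg : ∀ k, 0 ≤ b k)
    (hb_sum : Summable b)
    (hrec : ∀ k, P[e (k + 1) | G k] ≤ᵐ[P] fun ω => e k ω + b k - d k ω) :
    (∀ᵐ ω ∂P, Summable fun k => d k ω) ∧
      (Tendsto (fun k => ∫ ω, e k ω ∂P) atTop (nhds 0) →
        ∀ᵐ ω ∂P, Tendsto (fun k => e k ω) atTop (nhds 0)) := by
  have hx := supermartingale_add_compensator he_adapted.stronglyAdapted
    hd_adapted.stronglyAdapted he_int hd_int hb_sum hrec
  have hx_conv := hx.exists_ae_tendsto_of_nonneg fun k ω =>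
    add_nonneg (he_nonneg k ω) (compensator_nonneg hd_nonneg hb_nonneg k ω)
  have hd_sum : ∀ᵐ ω ∂P, Summable fun k => d k ω := by
    filter_upwards [hx_conv] with ω ⟨c, hc⟩
    exact summable_of_sum_range_le_of_tendsto (hd_nonneg · ω) hc fun k =>
      (sum_range_le_compensator hb_nonneg k ω).trans (le_add_of_nonneg_left (he_nonneg k ω))
  refine ⟨hd_sum, ae_tendsto_zero_of_tendsto_integral_of_nonneg he_nonneg he_int ?_⟩
  filter_upwards [hx_conv, hd_sum] with ω ⟨c, hc⟩ hω
  exact ⟨c - ∑' k, d k ω, by simpa using hc.sub (tendsto_compensator (b := b) hω)⟩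
end

section
/- Let A be an n×n matrix satisfying Assumption A1. Then there exists a constant s ∈ (0,1), depending only on A, such that for every vector c = (c_1,…,c_n) with c_i ∈ [0,1] for all i, λ_max(I(c) AᵀA I(c)) ≤ 1 − s Σ_{i=1}^n (1 − c_i²), where I(c) = diag{c_1,…,c_n}. -/
/-!
Put `B = AᵀA`, which is doubly stochastic, and `y = c ⊙ x` for a unit vector `x`. Then
`1 - yᵀ B y = Σᵢ (1 - cᵢ²) xᵢ² + ½ Σⱼₖ Bⱼₖ (yⱼ - yₖ)²`, a sum of two nonnegative energies.
Irreducibility of `B` joins any `q` to any `p` by at most `K` steps along entries `Bⱼₖ ≥ β > 0`,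
so `β (y_q - y_p)² ≤ K² Σⱼₖ Bⱼₖ (yⱼ - yₖ)²`. An elementary case distinction then bounds
`(1 - c_p²) x_q²` by `8 (Σᵢ (1 - cᵢ²) xᵢ² + K²/β · Σⱼₖ Bⱼₖ (yⱼ - yₖ)²)` for all `p, q`, and
summing over `p` and `q` gives the claim with `s = 1 / (8 n² (1 + 2K²/β))`.
-/

open Matrix BigOperators

/-- The largest eigenvalue of a symmetric real matrix, characterized as the supremum
of the Rayleigh quotient `xᵀ M x` over unit vectors `x`. -/
noncomputable def lambdaMax {ι : Type*} [Fintype ι] (M : Matrix ι ι ℝ) : ℝ :=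
  sSup {r : ℝ | ∃ x : ι → ℝ, ∑ i, x i ^ 2 = 1 ∧ r = x ⬝ᵥ M.mulVec x}

lemma Finite.exists_bound_of_forall_exists {α : Type*} [Finite α] {P : α → ℕ → Prop}
    (h : ∀ a, ∃ k, P a k) : ∃ K, ∀ a, ∃ k ≤ K, P a k := by
  choose f hf using h
  obtain ⟨K, hK⟩ := Finite.exists_le f
  exact ⟨K, fun a => ⟨f a, hK a, hf a⟩⟩

lemma Finite.exists_pos_le_of_pos {α : Type*} [Finite α] (f : α → ℝ) :
    ∃ β > 0, ∀ a, 0 < f a → β ≤ f a := by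
  obtain ⟨M, hM⟩ := Finite.exists_le fun a => (f a)⁻¹
  refine ⟨(max M 1)⁻¹, by positivity, fun a ha => ?_⟩
  rw [inv_le_comm₀ (by positivity) ha]
  exact (hM a).trans (le_max_left _ _)

lemma one_sub_sq_nonneg_of_mem_Icc {c : ℝ} (hc : c ∈ Set.Icc (0 : ℝ) 1) : 0 ≤ 1 - c ^ 2 :=
  sub_nonneg.2 (pow_le_one₀ hc.1 hc.2)

lemma one_sub_sq_mul_sq_le {cp cq xp xq T E : ℝ} (hcp : cp ∈ Set.Icc (0 : ℝ) 1)
    (hcq : cq ∈ Set.Icc (0 : ℝ) 1) (hTp : (1 - cp ^ 2) * xp ^ 2 ≤ T)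
    (hTq : (1 - cq ^ 2) * xq ^ 2 ≤ T) (hE : (cq * xq - cp * xp) ^ 2 ≤ E) :
    (1 - cp ^ 2) * xq ^ 2 ≤ 8 * (T + E) := by
  have hT : 0 ≤ T := (mul_nonneg (one_sub_sq_nonneg_of_mem_Icc hcq) (sq_nonneg xq)).trans hTq
  have hxq : (1 - cp ^ 2) * xq ^ 2 ≤ xq ^ 2 := by nlinarith
  -- Either `cq² ≤ 1/2`, so `xq² ≤ 2T`; or `xq² ≤ 8 xp²`, so the left side is at most `8T`;
  -- or else `(cq xq - cp xp)² ≥ xq² / 8`.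
  rcases le_or_gt (cq ^ 2) (1 / 2) with hcq2 | hcq2
  · nlinarith
  rcases le_or_gt (xq ^ 2) (8 * xp ^ 2) with hx | hx
  · nlinarith
  · nlinarith [sq_nonneg (cq * xq - 2 * (cp * xp)),
      mul_le_mul_of_nonneg_right (pow_le_one₀ hcp.1 hcp.2 : cp ^ 2 ≤ 1) (sq_nonneg xp)]

section
variable {ι : Type*} [Fintype ι]

def dirichletForm (B : Matrix ι ι ℝ) (y : ι → ℝ) : ℝ :=
  ∑ j, ∑ k, B j k * (y j - y k) ^ 2

lemma dirichletForm_nonneg {B : Matrix ι ι ℝ} (hB : ∀ j k, 0 ≤ B j k) (y : ι → ℝ) :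
    0 ≤ dirichletForm B y :=
  Finset.sum_nonneg fun j _ => Finset.sum_nonneg fun k _ => mul_nonneg (hB j k) (sq_nonneg _)

lemma mul_sub_sq_le_dirichletForm {B : Matrix ι ι ℝ} (hB : ∀ j k, 0 ≤ B j k) (y : ι → ℝ)
    (a b : ι) : B a b * (y a - y b) ^ 2 ≤ dirichletForm B y := by
  have hterm : ∀ j k, 0 ≤ B j k * (y j - y k) ^ 2 := fun j k => mul_nonneg (hB j k) (sq_nonneg _)
  calc B a b * (y a - y b) ^ 2 ≤ ∑ k, B a k * (y a - y k) ^ 2 :=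
        Finset.single_le_sum (fun k _ => hterm a k) (Finset.mem_univ b)
    _ ≤ dirichletForm B y :=
        Finset.single_le_sum (f := fun j => ∑ k, B j k * (y j - y k) ^ 2)
          (fun j _ => Finset.sum_nonneg fun k _ => hterm j k) (Finset.mem_univ a)

lemma lambdaMax_le {M : Matrix ι ι ℝ} {a : ℝ} (ha : 0 ≤ a)
    (h : ∀ x : ι → ℝ, x ⬝ᵥ x = 1 → x ⬝ᵥ M *ᵥ x ≤ a) : lambdaMax M ≤ a :=
  Real.sSup_le (by rintro _ ⟨x, hx, rfl⟩; exact h x (by simpa [dotProduct, sq] using hx)) ha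

variable [DecidableEq ι]

lemma dirichletForm_eq {B : Matrix ι ι ℝ} (hB : B ∈ doublyStochastic ℝ ι) (y : ι → ℝ) :
    dirichletForm B y = 2 * (y ⬝ᵥ y - y ⬝ᵥ B *ᵥ y) := by
  have hrow : ∑ j, ∑ k, B j k * y j ^ 2 = y ⬝ᵥ y := by
    simp only [← Finset.sum_mul, sum_row_of_mem_doublyStochastic hB, one_mul, dotProduct, sq]
  have hcol : ∑ j, ∑ k, B j k * y k ^ 2 = y ⬝ᵥ y := by
    rw [Finset.sum_comm]
    simp only [← Finset.sum_mul, sum_col_of_mem_doublyStochastic hB, one_mul, dotProduct, sq]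
  have hcross : ∑ j, ∑ k, B j k * (y j * y k) = y ⬝ᵥ B *ᵥ y := by
    simp only [dotProduct, mulVec, Finset.mul_sum]
    exact Finset.sum_congr rfl fun j _ => Finset.sum_congr rfl fun k _ => by ring
  calc dirichletForm B y
      = ∑ j, ∑ k, B j k * y j ^ 2 + ∑ j, ∑ k, B j k * y k ^ 2
          - 2 * ∑ j, ∑ k, B j k * (y j * y k) := by
        simp only [dirichletForm, Finset.mul_sum, ← Finset.sum_add_distrib,
          ← Finset.sum_sub_distrib]
        exact Finset.sum_congr rfl fun j _ => Finset.sum_congr rfl fun k _ => by ring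
    _ = 2 * (y ⬝ᵥ y - y ⬝ᵥ B *ᵥ y) := by rw [hrow, hcol, hcross]; ring

lemma dotProduct_diagonal_mul_mul_diagonal_mulVec (B : Matrix ι ι ℝ) (c x : ι → ℝ) :
    x ⬝ᵥ (diagonal c * B * diagonal c) *ᵥ x = (c * x) ⬝ᵥ B *ᵥ (c * x) := by
  have hleft : x ᵥ* diagonal c = c * x := funext fun i => by simp [vecMul_diagonal, mul_comm]
  have hright : diagonal c *ᵥ x = c * x := funext fun i => mulVec_diagonal c x i
  rw [← mulVec_mulVec, ← mulVec_mulVec, dotProduct_mulVec, hleft, hright]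

lemma abs_sub_le_of_pow_apply_pos {B : Matrix ι ι ℝ} (hB : ∀ j k, 0 ≤ B j k) {y : ι → ℝ}
    {t : ℝ} (ht : ∀ a b, 0 < B a b → |y a - y b| ≤ t) {k : ℕ} {q p : ι}
    (hqp : 0 < (B ^ k) q p) : |y q - y p| ≤ k * t := by
  induction k generalizing p with
  | zero =>
    obtain rfl : q = p := by
      by_contra hne
      simp [one_apply_ne hne] at hqp
    simp
  | succ k ih =>
    rw [pow_succ, mul_apply] at hqp
    obtain ⟨m, -, hm⟩ := Finset.exists_lt_of_sum_lt (f := fun _ => (0 : ℝ)) (by simpa using hqp)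
    have hmp : 0 < B m p := (hB m p).lt_of_ne' (right_ne_zero_of_mul hm.ne')
    have hqm : 0 < (B ^ k) q m := (pos_iff_pos_of_mul_pos hm).mpr hmp
    calc |y q - y p| ≤ |y q - y m| + |y m - y p| := abs_sub_le _ _ _
      _ ≤ k * t + t := add_le_add (ih hqm) (ht m p hmp)
      _ = (k + 1 : ℕ) * t := by push_cast; ring

lemma mul_sub_sq_le_sq_mul_dirichletForm {B : Matrix ι ι ℝ} (hB : ∀ j k, 0 ≤ B j k)
    {β : ℝ} (hβ : 0 < β) (hβB : ∀ a b, 0 < B a b → β ≤ B a b) (y : ι → ℝ) {k : ℕ} {q p : ι}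
    (hqp : 0 < (B ^ k) q p) : β * (y q - y p) ^ 2 ≤ k ^ 2 * dirichletForm B y := by
  have hedge : ∀ a b, 0 < B a b → |y a - y b| ≤ √(dirichletForm B y / β) := by
    intro a b hab
    rw [← Real.sqrt_sq_eq_abs]
    refine Real.sqrt_le_sqrt ?_
    rw [le_div_iff₀ hβ]
    calc (y a - y b) ^ 2 * β ≤ B a b * (y a - y b) ^ 2 := by
          rw [mul_comm]; exact mul_le_mul_of_nonneg_right (hβB a b hab) (sq_nonneg _)
      _ ≤ dirichletForm B y := mul_sub_sq_le_dirichletForm hB y a b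
  have hsq := pow_le_pow_left₀ (abs_nonneg _) (abs_sub_le_of_pow_apply_pos hB hedge hqp) 2
  rw [sq_abs, mul_pow, Real.sq_sqrt (div_nonneg (dirichletForm_nonneg hB y) hβ.le),
    ← mul_div_assoc, le_div_iff₀ hβ] at hsq
  linarith

variable {B : Matrix ι ι ℝ} {β : ℝ} {K : ℕ} {c : ι → ℝ}

lemma one_sub_sq_mul_sq_le_of_pow_apply_pos (hB : ∀ j k, 0 ≤ B j k) (hβ : 0 < β)
    (hβB : ∀ a b, 0 < B a b → β ≤ B a b) (hK : ∀ q p, ∃ k ≤ K, 0 < (B ^ k) q p)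
    (hc : ∀ i, c i ∈ Set.Icc (0 : ℝ) 1) (x : ι → ℝ) (p q : ι) :
    (1 - c p ^ 2) * x q ^ 2 ≤
      8 * (∑ i, (1 - c i ^ 2) * x i ^ 2 + K ^ 2 * dirichletForm B (c * x) / β) := by
  have hterm : ∀ i, (1 - c i ^ 2) * x i ^ 2 ≤ ∑ i, (1 - c i ^ 2) * x i ^ 2 := fun i =>
    Finset.single_le_sum (f := fun i => (1 - c i ^ 2) * x i ^ 2)
      (fun j _ => mul_nonneg (one_sub_sq_nonneg_of_mem_Icc (hc j)) (sq_nonneg _))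
      (Finset.mem_univ i)
  refine one_sub_sq_mul_sq_le (hc p) (hc q) (hterm p) (hterm q) ?_
  obtain ⟨k, hkK, hqp⟩ := hK q p
  rw [le_div_iff₀ hβ, mul_comm]
  calc β * (c q * x q - c p * x p) ^ 2 ≤ k ^ 2 * dirichletForm B (c * x) :=
        mul_sub_sq_le_sq_mul_dirichletForm hB hβ hβB (c * x) hqp
    _ ≤ K ^ 2 * dirichletForm B (c * x) := by
        gcongr
        exact dirichletForm_nonneg hB _

theorem sum_one_sub_sq_mul_dotProduct_le (hB : B ∈ doublyStochastic ℝ ι) (hβ : 0 < β)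
    (hβB : ∀ a b, 0 < B a b → β ≤ B a b) (hK : ∀ q p, ∃ k ≤ K, 0 < (B ^ k) q p)
    (hc : ∀ i, c i ∈ Set.Icc (0 : ℝ) 1) (x : ι → ℝ) :
    (∑ p, (1 - c p ^ 2)) * (x ⬝ᵥ x) ≤
      8 * Fintype.card ι ^ 2 * (1 + 2 * K ^ 2 / β) * (x ⬝ᵥ x - (c * x) ⬝ᵥ B *ᵥ (c * x)) := by
  have hB0 : ∀ j k, 0 ≤ B j k := fun _ _ => nonneg_of_mem_doublyStochastic hB
  set T := ∑ i, (1 - c i ^ 2) * x i ^ 2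
  set D := dirichletForm B (c * x)
  have hgap : x ⬝ᵥ x - (c * x) ⬝ᵥ B *ᵥ (c * x) = T + D / 2 := by
    have hT : x ⬝ᵥ x - (c * x) ⬝ᵥ (c * x) = T := by
      simp only [T, dotProduct, ← Finset.sum_sub_distrib, Pi.mul_apply]
      exact Finset.sum_congr rfl fun i _ => by ring
    rw [show D = _ from dirichletForm_eq hB (c * x)]
    linarith
  have hT0 : 0 ≤ T := Finset.sum_nonneg fun i _ =>
    mul_nonneg (one_sub_sq_nonneg_of_mem_Icc (hc i)) (sq_nonneg _)
  have hD0 : 0 ≤ D := dirichletForm_nonneg hB0 _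
  calc (∑ p, (1 - c p ^ 2)) * (x ⬝ᵥ x) = ∑ p, ∑ q, (1 - c p ^ 2) * x q ^ 2 := by
        simp only [dotProduct, Finset.sum_mul_sum, sq]
    _ ≤ ∑ p : ι, ∑ q : ι, 8 * (T + K ^ 2 * D / β) :=
        Finset.sum_le_sum fun p _ => Finset.sum_le_sum fun q _ =>
          one_sub_sq_mul_sq_le_of_pow_apply_pos hB0 hβ hβB hK hc x p q
    _ = 8 * Fintype.card ι ^ 2 * (T + K ^ 2 * D / β) := by
        simp only [Finset.sum_const, Finset.card_univ, nsmul_eq_mul]; ring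
    _ ≤ 8 * Fintype.card ι ^ 2 * (1 + 2 * K ^ 2 / β) * (T + D / 2) := by
        rw [mul_assoc _ (1 + _)]
        gcongr
        have hexpand : (1 + 2 * K ^ 2 / β) * (T + D / 2) = T + D / 2 + 2 * (K ^ 2 / β * T)
            + K ^ 2 * D / β := by ring
        have hKT : 0 ≤ K ^ 2 / β * T := by positivity
        linarith
    _ = _ := by rw [hgap]

end

theorem diffusion_contraction_corollary_general
    {n : ℕ} (hn : 1 ≤ n)
    (A : Matrix (Fin n) (Fin n) ℝ)
    (hA_nonneg : ∀ i j, 0 ≤ A i j)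
    (hA_row : ∀ i, ∑ j, A i j = 1)
    (hA_col : ∀ j, ∑ i, A i j = 1)
    (hA_AtA_irred : ∀ i j, ∃ k : ℕ, 1 ≤ k ∧ 0 < ((Aᵀ * A) ^ k) i j) :
    ∃ s : ℝ, s ∈ Set.Ioo (0 : ℝ) 1 ∧
      ∀ c : Fin n → ℝ, (∀ i, c i ∈ Set.Icc (0 : ℝ) 1) →
        lambdaMax (Matrix.diagonal c * (Aᵀ * A) * Matrix.diagonal c)
          ≤ 1 - s * ∑ i, (1 - c i ^ 2) := by
  have hA : A ∈ doublyStochastic ℝ (Fin n) :=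
    mem_doublyStochastic_iff_sum.2 ⟨hA_nonneg, hA_row, hA_col⟩
  have hB : Aᵀ * A ∈ doublyStochastic ℝ (Fin n) :=
    mul_mem (transpose_mem_doublyStochastic_iff.2 hA) hA
  obtain ⟨β, hβ, hβB⟩ := Finite.exists_pos_le_of_pos fun ab : Fin n × Fin n => (Aᵀ * A) ab.1 ab.2
  obtain ⟨K, hK⟩ := Finite.exists_bound_of_forall_exists fun ab : Fin n × Fin n =>
    (hA_AtA_irred ab.1 ab.2).imp fun _ => And.right
  set C : ℝ := 8 * n ^ 2 * (1 + 2 * K ^ 2 / β)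
  have hn1 : (1 : ℝ) ≤ n := Nat.one_le_cast.2 hn
  have hC : 8 * (n : ℝ) ≤ C :=
    calc 8 * (n : ℝ) ≤ 8 * n ^ 2 * 1 := by nlinarith
      _ ≤ C := by
        simp only [C]
        gcongr
        exact le_add_of_nonneg_right (by positivity)
  have hC0 : 0 < C := by linarith
  refine ⟨C⁻¹, ⟨by positivity, inv_lt_one_of_one_lt₀ (by linarith)⟩, fun c hc => ?_⟩
  have hsum : ∑ i, (1 - c i ^ 2) ≤ (n : ℝ) := by
    simpa using Finset.sum_le_card_nsmul Finset.univ (fun i => 1 - c i ^ 2) 1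
      fun i _ => sub_le_self 1 (sq_nonneg (c i))
  refine lambdaMax_le ?_ fun x hx => ?_
  · rw [sub_nonneg, inv_mul_le_iff₀ hC0]
    linarith
  · have hgap := sum_one_sub_sq_mul_dotProduct_le hB hβ (fun a b => hβB (a, b))
      (fun q p => hK (q, p)) hc x
    rw [hx, mul_one, Fintype.card_fin, ← inv_mul_le_iff₀ hC0] at hgap
    rw [dotProduct_diagonal_mul_mul_diagonal_mulVec]
    linarith

/-- **Corollary (contraction of the combination matrix).**
Let `A` be an `n×n` doubly stochastic matrix which is irreducible and aperiodic and
such that `AᵀA` is irreducible (Assumption A1).  Then there is a constant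
`s ∈ (0,1)`, depending only on `A`, such that for every vector `c = (c_1,…,c_n)` with
`c_i ∈ [0,1]`, one has `λ_max(I(c) AᵀA I(c)) ≤ 1 − s Σ_{i=1}^n (1 − c_i²)`, where
`I(c) = diag{c_1,…,c_n}`. -/
theorem diffusion_contraction_corollary
    {n : ℕ} (hn : 1 ≤ n)
    (A : Matrix (Fin n) (Fin n) ℝ)
    (hA_nonneg : ∀ i j, 0 ≤ A i j)
    (hA_row : ∀ i, ∑ j, A i j = 1)
    (hA_col : ∀ j, ∑ i, A i j = 1)
    (hA_prim : ∃ K : ℕ, 1 ≤ K ∧ ∀ i j, 0 < (A ^ K) i j)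
    (hA_AtA_irred : ∀ i j, ∃ k : ℕ, 1 ≤ k ∧ 0 < ((Aᵀ * A) ^ k) i j) :
    ∃ s : ℝ, s ∈ Set.Ioo (0 : ℝ) 1 ∧
      ∀ c : Fin n → ℝ, (∀ i, c i ∈ Set.Icc (0 : ℝ) 1) →
        lambdaMax (Matrix.diagonal c * (Aᵀ * A) * Matrix.diagonal c)
          ≤ 1 - s * ∑ i, (1 - c i ^ 2) :=
  diffusion_contraction_corollary_general hn A hA_nonneg hA_row hA_col hA_AtA_irred
end

section
/- Let A, j*, d, the sets P_0,…,P_d and the numbers b_{l,k} be as in the context. Let B_1,…,B_n be positive definite m×m matrices and, for z = col{v_1,…,v_n} ∈ ℝ^{mn} with v_i ∈ ℝ^m, define Q_0(z) = diag{(B_i^{-1} + v_i v_iᵀ)^{-1} B_i^{-1} : i = 1,…,n}. Fix C ∈ ℝ^{mn}. Then: (i) for each l ∈ {0,…,d−1}, if C ∉ P_{l+1}, then for every nonempty open set U ⊆ ℝ^{mn} there exists z ∈ U with (A⊗I_m)(Q_0(z)C) ∉ P_l; (ii) if C ∉ P_0, then for every nonempty open set U ⊆ ℝ^{mn} there exists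 z ∈ U with (A⊗I_m)(Q_0(z)C) ∉ P_d. -/
/-!
By Sherman–Morrison, `(B⁻¹ + v vᵀ)⁻¹ B⁻¹ x = x - (vᵀx / (1 + vᵀBv)) Bv`, so each coordinate of
`Q₀(z) C` is a real-analytic function of `z` on all of `ℝ^{mn}`, equal to the coordinate of `C`
at `z = 0`. Since `b_{l+1} = b_l A`, the output `(A ⊗ I)(Q₀(z) C)` lies in `P_l` iff one linear
combination `c_l` of the first coordinates of the blocks of `Q₀(z) C` vanishes (`c_0 = A_{j*}`,
`c_l = b_{l+1}` for `l ≥ 1`). By the identity theorem this analytic function of `z` vanishes on no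
nonempty open set unless it vanishes identically, so it suffices to find one `z` where it does not.
For (i) take `z = 0`: when `d > 0`, `A_{j*j*} = 0` and hence `A_{j*} = b_1`. For (ii) the
coefficient of block `j*` is `(A^{d+1})_{j*j*} > 0`, and moving `v_{j*}` from `0` to a coordinate
vector `e_a` changes that block's `a`-th coordinate from `C_{j*,a}` to `C_{j*,a} / (1 + B_{aa})`,
so the functional cannot vanish at both points.
-/

open Matrix

namespace Matrix

variable {ι : Type*} [Fintype ι]

theorem PosDef.one_add_dotProduct_mulVec_pos {B : Matrix ι ι ℝ} (hB : B.PosDef) (v : ι → ℝ) :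
    0 < 1 + v ⬝ᵥ B *ᵥ v := by
  have := hB.posSemidef.dotProduct_mulVec_nonneg v
  rw [star_trivial] at this
  linarith

variable [DecidableEq ι]

theorem PosDef.inv_add_vecMulVec_mul_inv_mulVec {B : Matrix ι ι ℝ} (hB : B.PosDef)
    (v x : ι → ℝ) :
    ((B⁻¹ + vecMulVec v v)⁻¹ * B⁻¹) *ᵥ x
      = x - ((v ⬝ᵥ x) / (1 + v ⬝ᵥ B *ᵥ v)) • B *ᵥ v := by
  have hM : (B⁻¹ + vecMulVec v v).PosDef := by
    simpa using hB.inv.add_posSemidef (posSemidef_vecMulVec_self_star v)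
  have hs := (hB.one_add_dotProduct_mulVec_pos v).ne'
  let := hM.isUnit.invertible
  rw [← mulVec_mulVec]
  apply inv_mulVec_eq_vec
  rw [add_mulVec, mulVec_sub, mulVec_sub, mulVec_smul, mulVec_smul, mulVec_mulVec,
    nonsing_inv_mul _ ((isUnit_iff_isUnit_det B).mp hB.isUnit), one_mulVec,
    vecMulVec_mulVec, vecMulVec_mulVec]
  ext i
  simp only [Pi.add_apply, Pi.sub_apply, Pi.smul_apply, smul_eq_mul,
    MulOpposite.smul_eq_mul_unop, MulOpposite.unop_op]
  field_simp
  ring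

theorem PosDef.inv_add_vecMulVec_zero_mul_inv_mulVec {B : Matrix ι ι ℝ} (hB : B.PosDef)
    (x : ι → ℝ) : ((B⁻¹ + vecMulVec 0 0)⁻¹ * B⁻¹) *ᵥ x = x := by
  simpa using hB.inv_add_vecMulVec_mul_inv_mulVec 0 x

theorem PosDef.inv_add_vecMulVec_single_mul_inv_mulVec_apply {B : Matrix ι ι ℝ} (hB : B.PosDef)
    (x : ι → ℝ) (a : ι) :
    (((B⁻¹ + vecMulVec (Pi.single a 1) (Pi.single a 1))⁻¹ * B⁻¹) *ᵥ x) a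
      = x a / (1 + B a a) := by
  have hs : 1 + B a a ≠ 0 := by linarith [hB.diag_pos (i := a)]
  rw [hB.inv_add_vecMulVec_mul_inv_mulVec]
  simp only [Pi.sub_apply, Pi.smul_apply, smul_eq_mul, mulVec_single_one, single_one_dotProduct,
    col_apply]
  field_simp
  ring

theorem PosDef.analyticOnNhd_inv_add_vecMulVec_mul_inv_mulVec_apply {B : Matrix ι ι ℝ}
    (hB : B.PosDef) (x : ι → ℝ) (a : ι) :
    AnalyticOnNhd ℝ (fun v => (((B⁻¹ + vecMulVec v v)⁻¹ * B⁻¹) *ᵥ x) a) Set.univ := by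
  intro v₀ _
  have coord (i : ι) : AnalyticAt ℝ (fun v : ι → ℝ => v i) v₀ :=
    (ContinuousLinearMap.proj (R := ℝ) (φ := fun _ : ι => ℝ) i).analyticAt v₀
  have dot {w : (ι → ℝ) → ι → ℝ} (hw : ∀ i, AnalyticAt ℝ (fun v => w v i) v₀) :
      AnalyticAt ℝ (fun v => v ⬝ᵥ w v) v₀ :=
    Finset.analyticAt_fun_sum _ fun i _ => (coord i).mul (hw i)
  have mulVecB (i : ι) : AnalyticAt ℝ (fun v => (B *ᵥ v) i) v₀ :=
    Finset.analyticAt_fun_sum _ fun k _ => analyticAt_const.mul (coord k)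
  simp_rw [hB.inv_add_vecMulVec_mul_inv_mulVec, Pi.sub_apply, Pi.smul_apply, smul_eq_mul]
  refine analyticAt_const.sub (AnalyticAt.mul ?_ (mulVecB a))
  exact (dot (w := fun _ => x) fun _ => analyticAt_const).fun_div
    (analyticAt_const.add (dot mulVecB)) (hB.one_add_dotProduct_mulVec_pos v₀).ne'

end Matrix

theorem AnalyticOnNhd.exists_mem_ne_zero_of_isOpen {𝕜 E F : Type*} [NontriviallyNormedField 𝕜]
    [NormedAddCommGroup E] [NormedSpace 𝕜 E] [PreconnectedSpace E]
    [NormedAddCommGroup F] [NormedSpace 𝕜 F] {f : E → F} (hf : AnalyticOnNhd 𝕜 f Set.univ)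
    {z₀ : E} (h₀ : f z₀ ≠ 0) {U : Set E} (hU : IsOpen U) (hU' : U.Nonempty) :
    ∃ z ∈ U, f z ≠ 0 := by
  by_contra! h
  obtain ⟨y, hy⟩ := hU'
  exact h₀ (hf.eqOn_zero_of_preconnected_of_eventuallyEq_zero isPreconnected_univ
    (Set.mem_univ y) (Filter.mem_of_superset (hU.mem_nhds hy) h) (Set.mem_univ z₀))

section BlockStep

variable {κ ι : Type*} [Fintype κ] [Fintype ι] [DecidableEq ι]
  {B : κ → Matrix ι ι ℝ} (hB : ∀ j, (B j).PosDef) (C : κ → ι → ℝ) (c : κ → ℝ) (a : ι)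
include hB

theorem exists_mem_sum_mul_inv_add_vecMulVec_ne_zero {z₀ : κ → ι → ℝ}
    (h₀ : ∑ j, c j * ((((B j)⁻¹ + vecMulVec (z₀ j) (z₀ j))⁻¹ * (B j)⁻¹) *ᵥ C j) a ≠ 0)
    {U : Set (κ → ι → ℝ)} (hU : IsOpen U) (hU' : U.Nonempty) :
    ∃ z ∈ U, ∑ j, c j * ((((B j)⁻¹ + vecMulVec (z j) (z j))⁻¹ * (B j)⁻¹) *ᵥ C j) a ≠ 0 := by
  have hF : AnalyticOnNhd ℝ (fun z : κ → ι → ℝ =>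
      ∑ j, c j * ((((B j)⁻¹ + vecMulVec (z j) (z j))⁻¹ * (B j)⁻¹) *ᵥ C j) a) Set.univ :=
    fun z _ => Finset.analyticAt_fun_sum _ fun j _ => analyticAt_const.mul <|
      ((hB j).analyticOnNhd_inv_add_vecMulVec_mul_inv_mulVec_apply (C j) a (z j) trivial).comp
        (f := fun z : κ → ι → ℝ => z j)
        ((ContinuousLinearMap.proj (R := ℝ) (φ := fun _ : κ => ι → ℝ) j).analyticAt z)
  exact hF.exists_mem_ne_zero_of_isOpen h₀ hU hU'

theorem exists_sum_mul_inv_add_vecMulVec_ne_zero [DecidableEq κ] {j₀ : κ} (hc : c j₀ ≠ 0)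
    (hC : C j₀ a ≠ 0) :
    ∃ z : κ → ι → ℝ,
      ∑ j, c j * ((((B j)⁻¹ + vecMulVec (z j) (z j))⁻¹ * (B j)⁻¹) *ᵥ C j) a ≠ 0 := by
  set F : (κ → ι → ℝ) → ℝ :=
    fun z => ∑ j, c j * ((((B j)⁻¹ + vecMulVec (z j) (z j))⁻¹ * (B j)⁻¹) *ᵥ C j) a
  have hF : F (Pi.single j₀ (Pi.single a 1)) - F 0
      = c j₀ * (C j₀ a / (1 + B j₀ a a) - C j₀ a) := by
    rw [← Finset.sum_sub_distrib, Finset.sum_eq_single j₀]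
    · simp only [Pi.single_eq_same, Pi.zero_apply, mul_sub,
        (hB j₀).inv_add_vecMulVec_single_mul_inv_mulVec_apply,
        (hB j₀).inv_add_vecMulVec_zero_mul_inv_mulVec]
    · intro j _ hj
      simp only [Pi.single_eq_of_ne hj, Pi.zero_apply, sub_self,
        (hB j).inv_add_vecMulVec_zero_mul_inv_mulVec]
    · simp
  have hne : C j₀ a / (1 + B j₀ a a) - C j₀ a ≠ 0 := by
    have hB₀ := (hB j₀).diag_pos (i := a)
    rw [sub_ne_zero, ne_eq, div_eq_iff (by positivity)]
    exact fun h => mul_ne_zero hC hB₀.ne' (by linear_combination -h)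
  by_contra! h
  exact mul_ne_zero hc hne (by simp [← hF, F, h])

end BlockStep

theorem critical_coeff_eq_pow_apply {R ι : Type*} [Semiring R] [Fintype ι] [DecidableEq ι]
    {A : Matrix ι ι R} {js : ι} {b : ℕ → ι → R}
    (hb1 : ∀ k, b 1 k = if k = js then 0 else A js k)
    (hbsucc : ∀ l k, 1 ≤ l → b (l + 1) k = ∑ i, b l i * A i k) (hA : A js js = 0) (l : ℕ) :
    b (l + 1) = (A ^ (l + 1)) js := by
  induction l with
  | zero => ext k; by_cases hk : k = js <;> simp [hb1, hk, hA]
  | succ l ih => ext k; rw [hbsucc _ _ l.succ_pos, ih, pow_succ _ (l + 1), mul_apply]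

theorem diffusion_RLS_hyperplane_escape_lemma_general
    {n m : ℕ} (hm : 0 < m)
    (A : Matrix (Fin n) (Fin n) ℝ)
    (hA_nonneg : ∀ i j, 0 ≤ A i j)
    (js : Fin n)
    (d : ℕ) (hd : 0 < (A ^ (d + 1)) js js)
    (hd_min : ∀ e, e < d → ¬ 0 < (A ^ (e + 1)) js js)
    (b : ℕ → Fin n → ℝ)
    (hb1 : ∀ k, b 1 k = if k = js then 0 else A js k)
    (hbsucc : ∀ l k, 1 ≤ l → b (l + 1) k = ∑ i, b l i * A i k)
    (Pset : ℕ → Set (Fin n → Fin m → ℝ))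
    (hP0 : Pset 0 = {C | C js ⟨0, hm⟩ = 0})
    (hPl : ∀ l, 1 ≤ l → Pset l = {C | ∑ k, b l k * C k ⟨0, hm⟩ = 0})
    (B : Fin n → Matrix (Fin m) (Fin m) ℝ)
    (hB : ∀ i, (B i).PosDef)
    (C : Fin n → Fin m → ℝ) :
    (∀ l, l < d → C ∉ Pset (l + 1) →
      ∀ U : Set (Fin n → Fin m → ℝ), IsOpen U → U.Nonempty →
        ∃ z ∈ U,
          (fun i a => ∑ j, A i j *
              ((((B j)⁻¹ + Matrix.vecMulVec (z j) (z j))⁻¹ * (B j)⁻¹).mulVec (C j)) a)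
            ∉ Pset l) ∧
    (C ∉ Pset 0 →
      ∀ U : Set (Fin n → Fin m → ℝ), IsOpen U → U.Nonempty →
        ∃ z ∈ U,
          (fun i a => ∑ j, A i j *
              ((((B j)⁻¹ + Matrix.vecMulVec (z j) (z j))⁻¹ * (B j)⁻¹).mulVec (C j)) a)
            ∉ Pset d) := by
  set a : Fin m := ⟨0, hm⟩
  let c (l : ℕ) : Fin n → ℝ := if l = 0 then A js else b (l + 1)
  let G (z : Fin n → Fin m → ℝ) (j : Fin n) : ℝ :=
    ((((B j)⁻¹ + vecMulVec (z j) (z j))⁻¹ * (B j)⁻¹) *ᵥ C j) a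
  have escape (l : ℕ) (z₀ : Fin n → Fin m → ℝ) (h₀ : c l ⬝ᵥ G z₀ ≠ 0)
      (U : Set (Fin n → Fin m → ℝ)) (hU : IsOpen U) (hU' : U.Nonempty) :
      ∃ z ∈ U, (fun i a => ∑ j, A i j *
          ((((B j)⁻¹ + Matrix.vecMulVec (z j) (z j))⁻¹ * (B j)⁻¹).mulVec (C j)) a) ∉ Pset l := by
    refine (exists_mem_sum_mul_inv_add_vecMulVec_ne_zero hB C (c l) a h₀ hU hU').imp
      fun z ⟨hzU, hz⟩ => ⟨hzU, fun hmem => hz ?_⟩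
    change c l ⬝ᵥ G z = 0
    rcases l with _ | l
    · rwa [hP0] at hmem
    · have hc : c (l + 1) = b (l + 1) ᵥ* A := funext fun k => hbsucc _ k l.succ_pos
      rw [hPl _ l.succ_pos] at hmem
      rwa [hc, ← dotProduct_mulVec]
  have hAjj (hd₀ : 0 < d) : A js js = 0 :=
    (hA_nonneg js js).antisymm' (by simpa using hd_min 0 hd₀)
  refine ⟨fun l hl hC => escape l 0 ?_, fun hC => ?_⟩
  · have hcl : c l = b (l + 1) := by
      rcases l with _ | l
      · simpa [c] using (critical_coeff_eq_pow_apply hb1 hbsucc (hAjj (by omega)) 0).symm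
      · rfl
    have hG0 : G 0 = fun j => C j a :=
      funext fun j => congrFun ((hB j).inv_add_vecMulVec_zero_mul_inv_mulVec (C j)) a
    rw [hPl _ l.succ_pos] at hC
    rwa [hcl, hG0]
  · have hCa : C js a ≠ 0 := by rwa [hP0] at hC
    have hcd : c d js ≠ 0 := by
      rcases d with _ | d
      · simpa [c] using hd.ne'
      · simpa [c, critical_coeff_eq_pow_apply hb1 hbsucc (hAjj d.succ_pos)] using hd.ne'
    obtain ⟨z₀, h₀⟩ := exists_sum_mul_inv_add_vecMulVec_ne_zero hB C (c d) a hcd hCa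
    exact escape d z₀ h₀

/-- **Lemma (moving a vector off the critical hyperplanes by one RLS-type step).**
Let `A` be an `n×n` row-stochastic matrix, `j*` a fixed node, `d` the smallest
nonnegative integer with `(A^{d+1})[j*,j*] > 0`, and let `P_0,…,P_d ⊆ ℝ^{mn}` be the
critical hyperplanes built from the coefficients `b_{l,k}` (block vectors
`C : Fin n → Fin m → ℝ`; `C[m(k−1)+1]` is `C k 0`).  Let `B_1,…,B_n` be positive
definite `m×m` matrices and, for `z = col{v_1,…,v_n}`, let
`Q_0(z) = diag{(B_i⁻¹+v_iv_iᵀ)⁻¹B_i⁻¹}`.  Then for `C ∈ ℝ^{mn}`: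
(i) for each `l ∈ {0,…,d−1}`, if `C ∉ P_{l+1}`, every nonempty open `U ⊆ ℝ^{mn}`
contains `z` with `(A⊗I_m)(Q_0(z)C) ∉ P_l`;
(ii) if `C ∉ P_0`, every nonempty open `U` contains `z` with
`(A⊗I_m)(Q_0(z)C) ∉ P_d`. -/
theorem diffusion_RLS_hyperplane_escape_lemma
    {n m : ℕ} (hn : 1 ≤ n) (hm : 0 < m)
    (A : Matrix (Fin n) (Fin n) ℝ)
    (hA_nonneg : ∀ i j, 0 ≤ A i j)
    (hA_row : ∀ i, ∑ j, A i j = 1)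
    (js : Fin n)
    (d : ℕ) (hd : 0 < (A ^ (d + 1)) js js)
    (hd_min : ∀ e, e < d → ¬ 0 < (A ^ (e + 1)) js js)
    (b : ℕ → Fin n → ℝ)
    (hb1 : ∀ k, b 1 k = if k = js then 0 else A js k)
    (hbsucc : ∀ l k, 1 ≤ l → b (l + 1) k = ∑ i, b l i * A i k)
    (Pset : ℕ → Set (Fin n → Fin m → ℝ))
    (hP0 : Pset 0 = {C | C js ⟨0, hm⟩ = 0})
    (hPl : ∀ l, 1 ≤ l → Pset l = {C | ∑ k, b l k * C k ⟨0, hm⟩ = 0})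
    (B : Fin n → Matrix (Fin m) (Fin m) ℝ)
    (hB : ∀ i, (B i).PosDef)
    (C : Fin n → Fin m → ℝ) :
    (∀ l, l < d → C ∉ Pset (l + 1) →
      ∀ U : Set (Fin n → Fin m → ℝ), IsOpen U → U.Nonempty →
        ∃ z ∈ U,
          (fun i a => ∑ j, A i j *
              ((((B j)⁻¹ + Matrix.vecMulVec (z j) (z j))⁻¹ * (B j)⁻¹).mulVec (C j)) a)
            ∉ Pset l) ∧
    (C ∉ Pset 0 →
      ∀ U : Set (Fin n → Fin m → ℝ), IsOpen U → U.Nonempty →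
        ∃ z ∈ U,
          (fun i a => ∑ j, A i j *
              ((((B j)⁻¹ + Matrix.vecMulVec (z j) (z j))⁻¹ * (B j)⁻¹).mulVec (C j)) a)
            ∉ Pset d) :=
  diffusion_RLS_hyperplane_escape_lemma_general hm A hA_nonneg js d hd hd_min b hb1 hbsucc Pset hP0
    hPl B hB C
end
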